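/- arXiv:1108.1273 — 6 statements merged into one kernel-verified Lean document; each statement's English description precedes it below -/
import Mathlib

section
/- If the superhedging cost ρ⁰ is (-∞,∞]-valued, then ρ⁰ is a coherent risk measure (proper, monotone, cash-invariant, convex, positively homogeneous), and its conjugate (ρ⁰)*(g) := sup_{x∈L} {g(-x) - ρ⁰(x)} equals 0 if g belongs to the set of positive normalized linear functionals vanishing nonpositively on M (i.e., g(1)=1 and g(m) ≤ 0 for all m ∈ M), and equals +∞ otherwise. -/
noncomputable section
open MeasureTheory Filter Topology
open scoped ENNReal

variable {Ω : Type*} [MeasurableSpace Ω]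

/-- The Köthe dual of `L`: a.e.-measurable `g` such that `g * x` is integrable for
every `x ∈ L`.  This plays the role of the dual Orlicz space `L†`. -/
def Kdual (μ : Measure Ω) (L : Set (Ω → ℝ)) : Set (Ω → ℝ) :=
  {g | AEStronglyMeasurable g μ ∧ ∀ x ∈ L, Integrable (fun ω => g ω * x ω) μ}

/-- `𝒬`: densities of probability measures `Q ≪ ℙ` with `dQ/dℙ ∈ L†` and
`E_Q[m] ≤ 0` for all `m ∈ M`. -/
def QSet (μ : Measure Ω) (L M : Set (Ω → ℝ)) : Set (Ω → ℝ) :=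
  {g | g ∈ Kdual μ L ∧ 0 ≤ᵐ[μ] g ∧ (∫ ω, g ω ∂μ) = 1 ∧
    ∀ m ∈ M, (∫ ω, g ω * m ω ∂μ) ≤ 0}

/-- `𝒬ᵉ`: elements of `𝒬` equivalent to `ℙ`, i.e. with a.e. strictly positive density. -/
def QeSet (μ : Measure Ω) (L M : Set (Ω → ℝ)) : Set (Ω → ℝ) :=
  {g | g ∈ QSet μ L M ∧ ∀ᵐ ω ∂μ, 0 < g ω}

/-- The superhedging cost `ρ⁰(x) = inf {c ∈ ℝ : ∃ m ∈ M, c + m + x ≥ 0 a.s.}`. -/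
def supCost (μ : Measure Ω) (M : Set (Ω → ℝ)) (x : Ω → ℝ) : EReal :=
  sInf {c : EReal | ∃ r : ℝ, c = (r : EReal) ∧ ∃ m ∈ M, ∀ᵐ ω ∂μ, 0 ≤ r + m ω + x ω}

/-- `ρ̂⁰(x) = sup_{Q ∈ 𝒬} E_Q[-x]`. -/
def rhoHat (μ : Measure Ω) (L M : Set (Ω → ℝ)) (x : Ω → ℝ) : EReal :=
  ⨆ g ∈ QSet μ L M, (↑(∫ ω, g ω * (-x ω) ∂μ) : EReal)

/-- `ρ` is a convex risk measure on `L`: proper, `(-∞,∞]`-valued, monotone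
(w.r.t. the a.s. order), cash-invariant, and convex. -/
def IsCRM (μ : Measure Ω) (L : Set (Ω → ℝ)) (ρ : (Ω → ℝ) → EReal) : Prop :=
  ρ 0 < ⊤ ∧ (∀ x ∈ L, ρ x ≠ ⊥) ∧
  (∀ x ∈ L, ∀ y ∈ L, x ≤ᵐ[μ] y → ρ y ≤ ρ x) ∧
  (∀ x ∈ L, ∀ c : ℝ, ρ (fun ω => x ω + c) = ρ x - (c : EReal)) ∧
  (∀ x ∈ L, ∀ y ∈ L, ∀ a : ℝ, 0 ≤ a → a ≤ 1 →
    ρ (fun ω => a * x ω + (1 - a) * y ω) ≤ (a : EReal) * ρ x + ((1 - a : ℝ) : EReal) * ρ y)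

/-- The Fatou property: `ρ(-xₙ) ↑ ρ(-x_∞)` along a.s. increasing a.s. convergent sequences. -/
def HasFatou (μ : Measure Ω) (L : Set (Ω → ℝ)) (ρ : (Ω → ℝ) → EReal) : Prop :=
  ∀ (x : ℕ → Ω → ℝ) (x' : Ω → ℝ), (∀ n, x n ∈ L) → x' ∈ L →
    (∀ᵐ ω ∂μ, Monotone (fun n => x n ω) ∧ Tendsto (fun n => x n ω) atTop (nhds (x' ω))) →
    ρ (-x') = ⨆ n, ρ (-(x n))

/-- A good deal valuation: a normalized convex risk measure with the Fatou property
whose values lie within the no-arbitrage pricing bound. -/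
def IsGDV (μ : Measure Ω) (L M : Set (Ω → ℝ)) (ρ : (Ω → ℝ) → EReal) : Prop :=
  IsCRM μ L ρ ∧ ρ 0 = 0 ∧ HasFatou μ L ρ ∧
  ∀ x ∈ L, -supCost μ M x ≤ ρ (-x) ∧ ρ (-x) ≤ supCost μ M (-x)

/-!
`ρ⁰(x)` is the infimum of the superhedging prices of `x`. The set of these prices moves by `-c`
when `c` is added to `x`, scales with `x` because `M` is a cone, and contains convex combinations
of prices because `M` is convex; this gives the risk-measure axioms. If `g` is positive,
`g 1 = 1` and `g ≤ 0` on `M`, then `g(-x) ≤ r` for every price `r` of `x`, so the conjugate is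
`≤ 0`, with equality at `x = 0`. Otherwise some `x` (a constant, or `-m` with `g m > 0`) has
`ρ⁰(x) < g(-x)`, and positive homogeneity scales this gap to `+∞`.
-/
lemma EReal.le_coe_mul_add_coe_mul_of_forall_lt {u v z : EReal} {a b : ℝ} (ha : 0 < a)
    (hb : 0 < b) (hu : u ≠ ⊥) (hv : v ≠ ⊥)
    (h : ∀ r s : ℝ, u < r → v < s → z ≤ ((a * r + b * s : ℝ) : EReal)) :
    z ≤ a * u + b * v := by
  induction u using EReal.rec with
  | bot => exact absurd rfl hu
  | top =>
    rw [EReal.coe_mul_top_of_pos ha, EReal.top_add_of_ne_bot]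
    · exact le_top
    · induction v using EReal.rec with
      | bot => exact absurd rfl hv
      | top => simp [EReal.coe_mul_top_of_pos hb]
      | coe q => exact_mod_cast EReal.coe_ne_bot (b * q)
  | coe p =>
    induction v using EReal.rec with
    | bot => exact absurd rfl hv
    | top =>
      rw [EReal.coe_mul_top_of_pos hb, ← EReal.coe_mul, EReal.coe_add_top]
      exact le_top
    | coe q =>
      rw [← EReal.coe_mul, ← EReal.coe_mul, ← EReal.coe_add]
      refine EReal.le_of_forall_lt_iff_le.1 fun w hw => ?_
      have hw : a * p + b * q < w := by exact_mod_cast hw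
      obtain ⟨ε, hε, rfl⟩ : ∃ ε : ℝ, 0 < ε ∧ a * (p + ε) + b * (q + ε) = w :=
        ⟨(w - (a * p + b * q)) / (a + b), _root_.div_pos (by linarith) (by linarith), by
          field_simp; ring⟩
      exact h (p + ε) (q + ε) (by exact_mod_cast lt_add_of_pos_right p hε)
        (by exact_mod_cast lt_add_of_pos_right q hε)

def IsSuperhedgingPrice (μ : Measure Ω) (M : Set (Ω → ℝ)) (x : Ω → ℝ) (r : ℝ) : Prop :=
  ∃ m ∈ M, ∀ᵐ ω ∂μ, 0 ≤ r + m ω + x ω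

namespace IsSuperhedgingPrice

variable {μ : Measure Ω} {M : Set (Ω → ℝ)} {x y : Ω → ℝ} {r s : ℝ}

lemma of_mem_of_nonneg {m : Ω → ℝ} (hm : m ∈ M) (h : ∀ ω, 0 ≤ r + m ω + x ω) :
    IsSuperhedgingPrice μ M x r :=
  ⟨m, hm, ae_of_all _ h⟩

lemma mono (h : IsSuperhedgingPrice μ M x r) (hxy : x ≤ᵐ[μ] y) (hrs : r ≤ s) :
    IsSuperhedgingPrice μ M y s := by
  obtain ⟨m, hm, hae⟩ := h
  refine ⟨m, hm, ?_⟩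
  filter_upwards [hae, hxy] with ω h1 h2
  linarith

lemma add_const (h : IsSuperhedgingPrice μ M x r) (c : ℝ) :
    IsSuperhedgingPrice μ M (fun ω => x ω + c) (r - c) := by
  obtain ⟨m, hm, hae⟩ := h
  refine ⟨m, hm, ?_⟩
  filter_upwards [hae] with ω hω
  linarith

lemma smul (hMcone : ∀ m ∈ M, ∀ c : ℝ, 0 ≤ c → c • m ∈ M) (h : IsSuperhedgingPrice μ M x r)
    {c : ℝ} (hc : 0 ≤ c) : IsSuperhedgingPrice μ M (c • x) (c * r) := by
  obtain ⟨m, hm, hae⟩ := h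
  refine ⟨c • m, hMcone m hm c hc, ?_⟩
  filter_upwards [hae] with ω hω
  simpa [mul_add] using mul_nonneg hc hω

lemma convexComb (hMconv : Convex ℝ M) (hx : IsSuperhedgingPrice μ M x r)
    (hy : IsSuperhedgingPrice μ M y s) {a b : ℝ} (ha : 0 ≤ a) (hb : 0 ≤ b) (hab : a + b = 1) :
    IsSuperhedgingPrice μ M (a • x + b • y) (a * r + b * s) := by
  obtain ⟨m, hm, haem⟩ := hx
  obtain ⟨n, hn, haen⟩ := hy
  refine ⟨a • m + b • n, hMconv hm hn ha hb hab, ?_⟩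
  filter_upwards [haem, haen] with ω hm hn
  simp only [Pi.add_apply, Pi.smul_apply, smul_eq_mul]
  nlinarith [mul_nonneg ha hm, mul_nonneg hb hn]

end IsSuperhedgingPrice

section supCost

variable {μ : Measure Ω} {M : Set (Ω → ℝ)} {x y : Ω → ℝ} {r : ℝ} {t : EReal}

lemma supCost_le (h : IsSuperhedgingPrice μ M x r) : supCost μ M x ≤ r :=
  sInf_le ⟨r, rfl, h⟩

lemma le_supCost (h : ∀ r : ℝ, IsSuperhedgingPrice μ M x r → t ≤ r) : t ≤ supCost μ M x :=
  le_sInf fun _ ⟨r, hr, hx⟩ => hr ▸ h r hx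

lemma exists_isSuperhedgingPrice_lt (h : supCost μ M x < t) :
    ∃ r : ℝ, (r : EReal) < t ∧ IsSuperhedgingPrice μ M x r := by
  obtain ⟨_, ⟨r, rfl, hx⟩, hlt⟩ := sInf_lt_iff.1 h
  exact ⟨r, hlt, hx⟩

lemma supCost_const_le (hM0 : (0 : Ω → ℝ) ∈ M) (c : ℝ) : supCost μ M (fun _ => c) ≤ (-c : ℝ) :=
  supCost_le (.of_mem_of_nonneg hM0 fun _ => by simp)

lemma supCost_zero_le (hM0 : (0 : Ω → ℝ) ∈ M) : supCost μ M 0 ≤ (0 : ℝ) :=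
  supCost_le (.of_mem_of_nonneg hM0 fun _ => by simp)

lemma supCost_neg_le_zero {m : Ω → ℝ} (hm : m ∈ M) : supCost μ M (-m) ≤ (0 : ℝ) :=
  supCost_le (.of_mem_of_nonneg hm fun _ => by simp)

lemma supCost_anti (hxy : x ≤ᵐ[μ] y) : supCost μ M y ≤ supCost μ M x :=
  le_supCost fun _ hx => supCost_le (hx.mono hxy le_rfl)

lemma supCost_add_const (c : ℝ) :
    supCost μ M (fun ω => x ω + c) = supCost μ M x - (c : EReal) := by
  have hshift : ∀ z : Ω → ℝ, ∀ c : ℝ,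
      supCost μ M (fun ω => z ω + c) + (c : EReal) ≤ supCost μ M z :=
    fun z c => le_supCost fun r hr => by
      calc supCost μ M (fun ω => z ω + c) + (c : EReal) ≤ ((r - c : ℝ) : EReal) + c :=
            add_le_add_left (supCost_le (hr.add_const c)) _
        _ = r := by norm_cast; ring
  refine le_antisymm ?_ ?_
  · rw [EReal.le_sub_iff_add_le (.inl (EReal.coe_ne_bot c)) (.inl (EReal.coe_ne_top c))]
    exact hshift x c
  · have hback := hshift (fun ω => x ω + c) (-c)
    simp only [add_neg_cancel_right, EReal.coe_neg] at hback
    rwa [← sub_eq_add_neg] at hback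

lemma coe_mul_supCost_le_supCost_smul (hMcone : ∀ m ∈ M, ∀ c : ℝ, 0 ≤ c → c • m ∈ M) {c : ℝ}
    (hc : 0 < c) : (c : EReal) * supCost μ M x ≤ supCost μ M (c • x) :=
  le_supCost fun r hr => by
    have hx : supCost μ M x ≤ (c⁻¹ * r : ℝ) := by
      simpa [inv_smul_smul₀ hc.ne'] using supCost_le (hr.smul hMcone (inv_nonneg.2 hc.le))
    calc (c : EReal) * supCost μ M x ≤ c * (c⁻¹ * r : ℝ) :=
          mul_le_mul_of_nonneg_left hx (by exact_mod_cast hc.le)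
      _ = r := by rw [← EReal.coe_mul, mul_inv_cancel_left₀ hc.ne']

lemma supCost_smul (hMcone : ∀ m ∈ M, ∀ c : ℝ, 0 ≤ c → c • m ∈ M) {c : ℝ} (hc : 0 < c) :
    supCost μ M (c • x) = c * supCost μ M x := by
  refine le_antisymm ?_ (coe_mul_supCost_le_supCost_smul hMcone hc)
  have h := coe_mul_supCost_le_supCost_smul (μ := μ) (x := c • x) hMcone (inv_pos.2 hc)
  rw [inv_smul_smul₀ hc.ne'] at h
  calc supCost μ M (c • x) = c * ((c⁻¹ : ℝ) * supCost μ M (c • x)) := by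
        rw [← mul_assoc, ← EReal.coe_mul, mul_inv_cancel₀ hc.ne', EReal.coe_one, one_mul]
    _ ≤ c * supCost μ M x := mul_le_mul_of_nonneg_left h (by exact_mod_cast hc.le)

lemma supCost_convexComb_le (hMconv : Convex ℝ M) (hx : supCost μ M x ≠ ⊥)
    (hy : supCost μ M y ≠ ⊥) {a : ℝ} (ha0 : 0 ≤ a) (ha1 : a ≤ 1) :
    supCost μ M (a • x + (1 - a) • y) ≤
      a * supCost μ M x + ((1 - a : ℝ) : EReal) * supCost μ M y := by
  rcases ha0.eq_or_lt with rfl | ha0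
  · simp
  rcases ha1.eq_or_lt with rfl | ha1
  · simp
  refine EReal.le_coe_mul_add_coe_mul_of_forall_lt ha0 (sub_pos.2 ha1) hx hy fun r s hr hs => ?_
  obtain ⟨r', hr', hxr⟩ := exists_isSuperhedgingPrice_lt hr
  obtain ⟨s', hs', hys⟩ := exists_isSuperhedgingPrice_lt hs
  have hr' : r' ≤ r := by exact_mod_cast hr'.le
  have hs' : s' ≤ s := by exact_mod_cast hs'.le
  refine (supCost_le (hxr.convexComb hMconv hys ha0.le (sub_pos.2 ha1).le (by ring))).trans ?_
  exact_mod_cast add_le_add (mul_le_mul_of_nonneg_left hr' ha0.le)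
    (mul_le_mul_of_nonneg_left hs' (sub_pos.2 ha1).le)

end supCost

def supCostConj (μ : Measure Ω) (L M : Set (Ω → ℝ)) (g : (Ω → ℝ) →ₗ[ℝ] ℝ) : EReal :=
  ⨆ x ∈ L, ((g (-x) : ℝ) : EReal) - supCost μ M x

section supCostConj

variable {μ : Measure Ω} {L : Submodule ℝ (Ω → ℝ)} {M : Set (Ω → ℝ)} {g : (Ω → ℝ) →ₗ[ℝ] ℝ}

lemma le_supCostConj {x : Ω → ℝ} (hx : x ∈ L) :
    ((g (-x) : ℝ) : EReal) - supCost μ M x ≤ supCostConj μ L M g :=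
  le_iSup₂ (f := fun x (_ : x ∈ (L : Set (Ω → ℝ))) => ((g (-x) : ℝ) : EReal) - supCost μ M x) x hx

lemma map_neg_le_supCost (hconst : ∀ c : ℝ, (fun _ => c) ∈ L) (hML : M ⊆ L)
    (hg : ∀ x ∈ L, (0 : Ω → ℝ) ≤ᵐ[μ] x → 0 ≤ g x) (hg1 : g (fun _ => 1) = 1)
    (hgM : ∀ m ∈ M, g m ≤ 0) {x : Ω → ℝ} (hx : x ∈ L) : ((g (-x) : ℝ) : EReal) ≤ supCost μ M x :=
  le_supCost fun r ⟨m, hm, hae⟩ => by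
    have hpos := hg (r • (fun _ => 1) + m + x)
      (L.add_mem (L.add_mem (L.smul_mem r (hconst 1)) (hML hm)) hx)
      (by filter_upwards [hae] with ω hω; simpa using hω)
    rw [map_add, map_add, map_smul, hg1, smul_eq_mul, mul_one] at hpos
    rw [map_neg, EReal.coe_le_coe_iff]
    linarith [hgM m hm]

lemma supCostConj_eq_zero (hconst : ∀ c : ℝ, (fun _ => c) ∈ L) (hML : M ⊆ L)
    (hM0 : (0 : Ω → ℝ) ∈ M) (hg : ∀ x ∈ L, (0 : Ω → ℝ) ≤ᵐ[μ] x → 0 ≤ g x)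
    (hg1 : g (fun _ => 1) = 1) (hgM : ∀ m ∈ M, g m ≤ 0) : supCostConj μ L M g = 0 := by
  refine le_antisymm (iSup₂_le fun x hx => ?_) ((le_supCostConj L.zero_mem).trans' ?_)
  · exact EReal.sub_nonpos.2 (map_neg_le_supCost hconst hML hg hg1 hgM hx)
  · simpa using supCost_zero_le (μ := μ) hM0

lemma supCostConj_eq_top_of_supCost_lt (hMcone : ∀ m ∈ M, ∀ c : ℝ, 0 ≤ c → c • m ∈ M)
    {x : Ω → ℝ} (hx : x ∈ L) {k : ℝ} (hk : supCost μ M x ≤ k) (hgk : k < g (-x)) :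
    supCostConj μ L M g = ⊤ := by
  refine (EReal.eq_top_iff_forall_lt _).2 fun t => ?_
  set c := (|t| + 1) / (g (-x) - k)
  have hc : 0 < c := div_pos (by positivity) (sub_pos.2 hgk)
  have hck : c * (g (-x) - k) = |t| + 1 := div_mul_cancel₀ _ (sub_pos.2 hgk).ne'
  have hcx : supCost μ M (c • x) ≤ (c * k : ℝ) := by
    rw [supCost_smul hMcone hc, EReal.coe_mul]
    exact mul_le_mul_of_nonneg_left hk (by exact_mod_cast hc.le)
  calc (t : EReal) < (c * g (-x) - c * k : ℝ) := by
        exact_mod_cast (le_abs_self t).trans_lt (by linarith)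
    _ ≤ ((g (-(c • x)) : ℝ) : EReal) - supCost μ M (c • x) := by
        rw [EReal.coe_sub, ← smul_neg, map_smul, smul_eq_mul]
        exact EReal.sub_le_sub le_rfl hcx
    _ ≤ supCostConj μ L M g := le_supCostConj (L.smul_mem c hx)

lemma supCostConj_eq_top (hconst : ∀ c : ℝ, (fun _ => c) ∈ L) (hML : M ⊆ L)
    (hM0 : (0 : Ω → ℝ) ∈ M) (hMcone : ∀ m ∈ M, ∀ c : ℝ, 0 ≤ c → c • m ∈ M)
    (hg : ¬ (g (fun _ => 1) = 1 ∧ ∀ m ∈ M, g m ≤ 0)) : supCostConj μ L M g = ⊤ := by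
  by_cases hgM : ∀ m ∈ M, g m ≤ 0
  · rcases (Ne.lt_or_gt fun h => hg ⟨h, hgM⟩) with hlt | hgt
    · refine supCostConj_eq_top_of_supCost_lt hMcone (hconst 1) (supCost_const_le hM0 1) ?_
      rw [map_neg]
      linarith
    · refine supCostConj_eq_top_of_supCost_lt hMcone (hconst (-1)) (supCost_const_le hM0 (-1)) ?_
      have : -(fun _ => (-1 : ℝ)) = (fun _ => (1 : ℝ) : Ω → ℝ) := by funext; simp
      rw [this]
      linarith
  · obtain ⟨m, hm, hgm⟩ : ∃ m ∈ M, 0 < g m := by simpa using hgM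
    exact supCostConj_eq_top_of_supCost_lt hMcone (L.neg_mem (hML hm)) (supCost_neg_le_zero hm)
      (by simpa using hgm)

end supCostConj

theorem stmt_3_general (μ : Measure Ω)
    (L : Submodule ℝ (Ω → ℝ)) (hconst : ∀ c : ℝ, (fun _ => c) ∈ L)
    (M : Set (Ω → ℝ)) (hML : M ⊆ (L : Set (Ω → ℝ)))
    (hMconv : Convex ℝ M)
    (hMcone : ∀ m ∈ M, ∀ c : ℝ, 0 ≤ c → c • m ∈ M)
    (hMneg : ∀ x ∈ L, x ≤ᵐ[μ] (0 : Ω → ℝ) → x ∈ M)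
    (hbot : ∀ x ∈ L, supCost μ M x ≠ ⊥) :
    -- properness
    supCost μ M 0 < ⊤ ∧
    -- monotonicity
    (∀ x ∈ L, ∀ y ∈ L, x ≤ᵐ[μ] y → supCost μ M y ≤ supCost μ M x) ∧
    -- cash-invariance
    (∀ x ∈ L, ∀ c : ℝ, supCost μ M (fun ω => x ω + c) = supCost μ M x - (c : EReal)) ∧
    -- convexity
    (∀ x ∈ L, ∀ y ∈ L, ∀ a : ℝ, 0 ≤ a → a ≤ 1 →
      supCost μ M (fun ω => a * x ω + (1 - a) * y ω) ≤
        (a : EReal) * supCost μ M x + ((1 - a : ℝ) : EReal) * supCost μ M y) ∧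
    -- positive homogeneity
    (∀ x ∈ L, ∀ c : ℝ, 0 < c → supCost μ M (fun ω => c * x ω) = (c : EReal) * supCost μ M x) ∧
    -- the conjugate of ρ⁰
    (∀ g : (Ω → ℝ) →ₗ[ℝ] ℝ, (∀ x ∈ L, (0 : Ω → ℝ) ≤ᵐ[μ] x → 0 ≤ g x) →
      ((g (fun _ => 1) = 1 ∧ ∀ m ∈ M, g m ≤ 0) →
        (⨆ x ∈ (L : Set (Ω → ℝ)), ((↑(g (-x)) : EReal) - supCost μ M x)) = 0) ∧
      (¬ (g (fun _ => 1) = 1 ∧ ∀ m ∈ M, g m ≤ 0) →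
        (⨆ x ∈ (L : Set (Ω → ℝ)), ((↑(g (-x)) : EReal) - supCost μ M x)) = ⊤)) := by
  have hM0 : (0 : Ω → ℝ) ∈ M := hMneg 0 L.zero_mem (EventuallyLE.refl _ _)
  exact ⟨(supCost_zero_le hM0).trans_lt (EReal.coe_lt_top _),
    fun x _ y _ hxy => supCost_anti hxy,
    fun x _ c => supCost_add_const c,
    fun x hx y hy a ha0 ha1 => supCost_convexComb_le hMconv (hbot x hx) (hbot y hy) ha0 ha1,
    fun x _ c hc => supCost_smul hMcone hc,
    fun g hg => ⟨fun ⟨hg1, hgM⟩ => supCostConj_eq_zero hconst hML hM0 hg hg1 hgM,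
      supCostConj_eq_top hconst hML hM0 hMcone⟩⟩

/-- if the superhedging cost `ρ⁰` is `(-∞,∞]`-valued then it is a
coherent risk measure, and its conjugate equals `0` on positive normalized linear
functionals vanishing nonpositively on `M`, and `+∞` otherwise. -/
theorem stmt_3 (μ : Measure Ω) [IsProbabilityMeasure μ]
    (L : Submodule ℝ (Ω → ℝ)) (hconst : ∀ c : ℝ, (fun _ => c) ∈ L)
    (M : Set (Ω → ℝ)) (hML : M ⊆ (L : Set (Ω → ℝ)))
    (hMconv : Convex ℝ M)
    (hMcone : ∀ m ∈ M, ∀ c : ℝ, 0 ≤ c → c • m ∈ M)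
    (hMneg : ∀ x ∈ L, x ≤ᵐ[μ] (0 : Ω → ℝ) → x ∈ M)
    (hbot : ∀ x ∈ L, supCost μ M x ≠ ⊥) :
    -- properness
    supCost μ M 0 < ⊤ ∧
    -- monotonicity
    (∀ x ∈ L, ∀ y ∈ L, x ≤ᵐ[μ] y → supCost μ M y ≤ supCost μ M x) ∧
    -- cash-invariance
    (∀ x ∈ L, ∀ c : ℝ, supCost μ M (fun ω => x ω + c) = supCost μ M x - (c : EReal)) ∧
    -- convexity
    (∀ x ∈ L, ∀ y ∈ L, ∀ a : ℝ, 0 ≤ a → a ≤ 1 →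
      supCost μ M (fun ω => a * x ω + (1 - a) * y ω) ≤
        (a : EReal) * supCost μ M x + ((1 - a : ℝ) : EReal) * supCost μ M y) ∧
    -- positive homogeneity
    (∀ x ∈ L, ∀ c : ℝ, 0 < c → supCost μ M (fun ω => c * x ω) = (c : EReal) * supCost μ M x) ∧
    -- the conjugate of ρ⁰
    (∀ g : (Ω → ℝ) →ₗ[ℝ] ℝ, (∀ x ∈ L, (0 : Ω → ℝ) ≤ᵐ[μ] x → 0 ≤ g x) →
      ((g (fun _ => 1) = 1 ∧ ∀ m ∈ M, g m ≤ 0) →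
        (⨆ x ∈ (L : Set (Ω → ℝ)), ((↑(g (-x)) : EReal) - supCost μ M x)) = 0) ∧
      (¬ (g (fun _ => 1) = 1 ∧ ∀ m ∈ M, g m ≤ 0) →
        (⨆ x ∈ (L : Set (Ω → ℝ)), ((↑(g (-x)) : EReal) - supCost μ M x)) = ⊤)) :=
  stmt_3_general μ L hconst M hML hMconv hMcone hMneg hbot
end
end

section
/- If 𝒬ᵉ := {Q ∈ 𝒬 : Q ∼ ℙ} is nonempty, then the coherent risk measure ρ̂⁰(x) = sup_{Q∈𝒬} E_Q[-x] is relevant, i.e. ρ̂⁰(-z) > 0 for every z ∈ L₊ \ {0}. Moreover sup_{Q∈𝒬} E_Q[x] = sup_{Q∈𝒬ᵉ} E_Q[x] for all x ∈ L. -/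
/-! An equivalent density `g₀ > 0` pairs strictly positively with every nonzero `z ≥ 0`, which
gives relevance. For the second claim, any `g ∈ 𝒬` is the limit of the mixtures
`t g₀ + (1 - t) g ∈ 𝒬ᵉ` as `t ↓ 0`, and the pairing with `x` is affine in `t`, so the
supremum over `𝒬ᵉ` already dominates `E_g[x]`. -/

noncomputable section
open MeasureTheory Filter Topology
open scoped ENNReal

variable {Ω : Type*} [MeasurableSpace Ω]

variable {μ : Measure Ω}

lemma EReal.coe_le_of_forall_convexComb_le {a b : ℝ} {S : EReal}
    (h : ∀ t : ℝ, 0 < t → t ≤ 1 → ((t * a + (1 - t) * b : ℝ) : EReal) ≤ S) :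
    (b : EReal) ≤ S := by
  have hcont : Continuous fun t : ℝ => t * a + (1 - t) * b := by fun_prop
  have htend : Tendsto (fun t : ℝ => t * a + (1 - t) * b) (𝓝[>] 0) (𝓝 b) := by
    simpa using (hcont.tendsto 0).mono_left nhdsWithin_le_nhds
  refine le_of_tendsto (EReal.tendsto_coe.mpr htend) ?_
  filter_upwards [Ioc_mem_nhdsGT one_pos] with t ht using h t ht.1 ht.2

lemma integral_mul_pos_of_ae_pos {g z : Ω → ℝ} (hg : ∀ᵐ ω ∂μ, 0 < g ω) (hz_nonneg : 0 ≤ᵐ[μ] z)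
    (hz_ne : ¬ z =ᵐ[μ] 0) (hint : Integrable (fun ω => g ω * z ω) μ) :
    0 < ∫ ω, g ω * z ω ∂μ := by
  have hnn : 0 ≤ᵐ[μ] fun ω => g ω * z ω := by
    filter_upwards [hg, hz_nonneg] with ω hgω hzω using mul_nonneg hgω.le hzω
  refine (integral_nonneg_of_ae hnn).lt_of_ne fun h => hz_ne ?_
  filter_upwards [(integral_eq_zero_iff_of_nonneg_ae hnn hint).mp h.symm, hg] with ω h0 hgω
  exact (mul_eq_zero.mp h0).resolve_left hgω.ne'

lemma convexComb_mul_eq {α : Type*} (t : ℝ) (g₀ g y : α → ℝ) :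
    (fun ω => (t * g₀ ω + (1 - t) * g ω) * y ω)
      = fun ω => t * (g₀ ω * y ω) + (1 - t) * (g ω * y ω) := by
  funext ω; ring

lemma integral_convexComb_mul {g₀ g y : Ω → ℝ} (h₀ : Integrable (fun ω => g₀ ω * y ω) μ)
    (h : Integrable (fun ω => g ω * y ω) μ) (t : ℝ) :
    ∫ ω, (t * g₀ ω + (1 - t) * g ω) * y ω ∂μ
      = t * ∫ ω, g₀ ω * y ω ∂μ + (1 - t) * ∫ ω, g ω * y ω ∂μ := by
  rw [convexComb_mul_eq, integral_add (h₀.const_mul t) (h.const_mul (1 - t)),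
    integral_const_mul, integral_const_mul]

section Mixture

variable {L M : Set (Ω → ℝ)}

lemma convexComb_mem_QeSet (h1 : (fun _ => (1 : ℝ)) ∈ L) (hML : M ⊆ L)
    {g₀ g : Ω → ℝ} (hg₀ : g₀ ∈ QeSet μ L M) (hg : g ∈ QSet μ L M) {t : ℝ}
    (ht0 : 0 < t) (ht1 : t ≤ 1) :
    (fun ω => t * g₀ ω + (1 - t) * g ω) ∈ QeSet μ L M := by
  obtain ⟨⟨⟨hm₀, hi₀⟩, -, hone₀, hM₀⟩, hpos₀⟩ := hg₀
  obtain ⟨⟨hm, hi⟩, hnn, hone, hM⟩ := hg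
  have ht1' : 0 ≤ 1 - t := by linarith
  have hpos : ∀ᵐ ω ∂μ, 0 < t * g₀ ω + (1 - t) * g ω := by
    filter_upwards [hpos₀, hnn] with ω h₀ h
    exact add_pos_of_pos_of_nonneg (mul_pos ht0 h₀) (mul_nonneg ht1' h)
  refine ⟨⟨⟨(hm₀.const_mul t).add (hm.const_mul (1 - t)), fun y hy => ?_⟩,
    hpos.mono fun ω h => h.le, ?_, fun m hm => ?_⟩, hpos⟩
  · rw [convexComb_mul_eq]
    exact ((hi₀ y hy).const_mul t).add ((hi y hy).const_mul (1 - t))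
  · simpa [hone₀, hone] using integral_convexComb_mul (hi₀ _ h1) (hi _ h1) t
  · rw [integral_convexComb_mul (hi₀ m (hML hm)) (hi m (hML hm))]
    nlinarith [hM₀ m hm, hM m hm]

lemma iSup_QSet_eq_iSup_QeSet (h1 : (fun _ => (1 : ℝ)) ∈ L) (hML : M ⊆ L)
    (hQe : (QeSet μ L M).Nonempty) {x : Ω → ℝ} (hx : x ∈ L) :
    (⨆ g ∈ QSet μ L M, ((∫ ω, g ω * x ω ∂μ : ℝ) : EReal)) =
      ⨆ g ∈ QeSet μ L M, ((∫ ω, g ω * x ω ∂μ : ℝ) : EReal) := by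
  obtain ⟨g₀, hg₀⟩ := hQe
  refine le_antisymm (iSup₂_le fun g hg => ?_)
    (iSup₂_le fun g hg => le_iSup₂_of_le (f := fun g (_ : g ∈ QSet μ L M) =>
      ((∫ ω, g ω * x ω ∂μ : ℝ) : EReal)) g hg.1 le_rfl)
  refine EReal.coe_le_of_forall_convexComb_le (a := ∫ ω, g₀ ω * x ω ∂μ) fun t ht0 ht1 => ?_
  rw [← integral_convexComb_mul (hg₀.1.1.2 x hx) (hg.1.2 x hx)]
  exact le_iSup₂_of_le (f := fun g (_ : g ∈ QeSet μ L M) => ((∫ ω, g ω * x ω ∂μ : ℝ) : EReal))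
    _ (convexComb_mem_QeSet h1 hML hg₀ hg ht0 ht1) le_rfl

lemma rhoHat_neg_pos (hQe : (QeSet μ L M).Nonempty) {z : Ω → ℝ} (hz : z ∈ L)
    (hz_nonneg : 0 ≤ᵐ[μ] z) (hz_ne : ¬ z =ᵐ[μ] 0) : 0 < rhoHat μ L M (-z) := by
  obtain ⟨g₀, hg₀Q, hg₀pos⟩ := hQe
  have hpos := integral_mul_pos_of_ae_pos hg₀pos hz_nonneg hz_ne (hg₀Q.1.2 z hz)
  refine lt_of_lt_of_le (EReal.coe_pos.mpr hpos) ?_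
  simpa only [rhoHat, Pi.neg_apply, neg_neg] using
    le_iSup₂ (f := fun g (_ : g ∈ QSet μ L M) => ((∫ ω, g ω * z ω ∂μ : ℝ) : EReal)) g₀ hg₀Q

end Mixture

theorem stmt_5_general (μ : Measure Ω)
    (L : Submodule ℝ (Ω → ℝ)) (hconst : ∀ c : ℝ, (fun _ => c) ∈ L)
    (M : Set (Ω → ℝ)) (hML : M ⊆ (L : Set (Ω → ℝ)))
    (hQe : (QeSet μ (L : Set (Ω → ℝ)) M).Nonempty) :
    (∀ z ∈ L, 0 ≤ᵐ[μ] z → ¬ z =ᵐ[μ] (0 : Ω → ℝ) →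
      0 < rhoHat μ (L : Set (Ω → ℝ)) M (-z)) ∧
    (∀ x ∈ L,
      (⨆ g ∈ QSet μ (L : Set (Ω → ℝ)) M, (↑(∫ ω, g ω * x ω ∂μ) : EReal)) =
      (⨆ g ∈ QeSet μ (L : Set (Ω → ℝ)) M, (↑(∫ ω, g ω * x ω ∂μ) : EReal))) :=
  ⟨fun _ hz hz_nonneg hz_ne => rhoHat_neg_pos hQe hz hz_nonneg hz_ne,
    fun _ hx => iSup_QSet_eq_iSup_QeSet (hconst 1) hML hQe hx⟩

/-- if `𝒬ᵉ ≠ ∅` then `ρ̂⁰` is relevant, and the supremum over `𝒬`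
coincides with the supremum over `𝒬ᵉ`. -/
theorem stmt_5 (μ : Measure Ω) [IsProbabilityMeasure μ]
    (L : Submodule ℝ (Ω → ℝ)) (hconst : ∀ c : ℝ, (fun _ => c) ∈ L)
    (M : Set (Ω → ℝ)) (hML : M ⊆ (L : Set (Ω → ℝ)))
    (hMconv : Convex ℝ M)
    (hMcone : ∀ m ∈ M, ∀ c : ℝ, 0 ≤ c → c • m ∈ M)
    (hMneg : ∀ x ∈ L, x ≤ᵐ[μ] (0 : Ω → ℝ) → x ∈ M)
    (hQe : (QeSet μ (L : Set (Ω → ℝ)) M).Nonempty) :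
    (∀ z ∈ L, 0 ≤ᵐ[μ] z → ¬ z =ᵐ[μ] (0 : Ω → ℝ) →
      0 < rhoHat μ (L : Set (Ω → ℝ)) M (-z)) ∧
    (∀ x ∈ L,
      (⨆ g ∈ QSet μ (L : Set (Ω → ℝ)) M, (↑(∫ ω, g ω * x ω ∂μ) : EReal)) =
      (⨆ g ∈ QeSet μ (L : Set (Ω → ℝ)) M, (↑(∫ ω, g ω * x ω ∂μ) : EReal))) :=
  stmt_5_general μ L hconst M hML hQe
end
end

section
/- Let ρ be a convex risk measure and define the risk indifference price I(ρ)(x) = inf{c ∈ ℝ : inf_{m∈M} ρ(c + m + x) ≤ inf_{m∈M} ρ(m)}. If I(ρ) is (-∞,∞]-valued, then inf_{m∈M} ρ(m) is finite, I(ρ) is a convex risk measure, and its conjugate satisfies I(ρ)*(g) = ρ*(g) + inf_{m∈M} ρ(m) if g is a positive normalized linear functional with g(m) ≤ 0 for all m ∈ M, and I(ρ)*(g) = ∞ otherwise. -/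
/-!
Write `A = inf_{m ∈ M} ρ(m)` and `B(x) = inf_{m ∈ M} ρ(x + m)` for the hedged risk. Cash invariance
of `ρ` gives `B(x + c) = B(x) - c`, so the admissible prices for `x` are the reals `c ≥ B(x) - A`
and `I(ρ) = B - A`; as `I(ρ)(0) > -∞`, this forces `A` to be finite. Monotonicity and cash
invariance pass from `ρ` to `B`, and so does convexity because `M` is convex.

For the conjugate, hedging `x` with `m ∈ M` replaces `g(x) - ρ(m - x)` by
`g(x - m) - ρ(-(x - m)) + g(m)`, so `B* = ρ*` when `g ≤ 0` on `M`, and `I(ρ)* = ρ* + A`.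
Otherwise the objective is unbounded along a ray: `t m` with `g(m) > 0`, or the constants when
`g(1) ≠ 1`.
-/

noncomputable section
open MeasureTheory Filter Topology

variable {Ω : Type*} [MeasurableSpace Ω]

/-- The risk indifference price
`I(ρ)(x) = inf {c ∈ ℝ : inf_{m∈M} ρ(c + m + x) ≤ inf_{m∈M} ρ(m)}`. -/
def riskIndiff (M : Set (Ω → ℝ)) (ρ : (Ω → ℝ) → EReal) (x : Ω → ℝ) : EReal :=
  sInf {c : EReal | ∃ r : ℝ, c = (r : EReal) ∧
    (⨅ m ∈ M, ρ (fun ω => r + m ω + x ω)) ≤ ⨅ m ∈ M, ρ m}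

/-- The conjugate `ρ*(g) = sup_{x ∈ L} {g(x) - ρ(-x)}`. -/
def conjRM (L : Set (Ω → ℝ)) (ρ : (Ω → ℝ) → EReal) (g : (Ω → ℝ) →ₗ[ℝ] ℝ) : EReal :=
  ⨆ x ∈ L, ((↑(g x) : EReal) - ρ (-x))

namespace EReal
variable {ι : Sort*}

def addCoeOrderIso (r : ℝ) : EReal ≃o EReal :=
  Equiv.toOrderIso
    { toFun := (· + r), invFun := (· - r),
      left_inv := fun _ => add_sub_cancel_right, right_inv := fun _ => sub_add_cancel }
    (fun _ _ h => add_le_add_left h _) (fun _ _ h => sub_le_sub h le_rfl)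

lemma iSup_add_coe (f : ι → EReal) (r : ℝ) : (⨆ i, f i) + r = ⨆ i, (f i + r) :=
  (addCoeOrderIso r).map_iSup f

lemma iInf_sub_coe (f : ι → EReal) (r : ℝ) : (⨅ i, f i) - r = ⨅ i, (f i - r) := by
  simp only [sub_eq_add_neg, ← coe_neg]
  exact (addCoeOrderIso (-r)).map_iInf f

lemma neg_iInf (f : ι → EReal) : -(⨅ i, f i) = ⨆ i, -f i :=
  negOrderIso.map_iInf f

lemma coe_sub_iInf (t : ℝ) (f : ι → EReal) : (t : EReal) - ⨅ i, f i = ⨆ i, ((t : EReal) - f i) := by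
  simp only [sub_eq_add_neg, add_comm (t : EReal), neg_iInf, iSup_add_coe]

lemma coe_sub_sub_coe (t r : ℝ) (u : EReal) : (t : EReal) - (u - r) = (t - u) + r := by
  induction u using EReal.rec with
  | bot => simp
  | top => simp
  | coe v => norm_cast; ring

lemma sub_coe_le_coe_comm (u : EReal) (r a : ℝ) : u - r ≤ a ↔ u - a ≤ r := by
  induction u using EReal.rec with
  | bot => simp
  | top => simp
  | coe v => norm_cast; constructor <;> intro h <;> linarith

lemma sInf_coe_of_le (u : EReal) : sInf {c : EReal | ∃ r : ℝ, c = r ∧ u ≤ r} = u := by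
  refine le_antisymm (le_of_forall_lt_iff_le.1 fun z hz => sInf_le ⟨z, rfl, hz.le⟩) ?_
  exact le_sInf fun _ ⟨_, hc, hu⟩ => hc ▸ hu

lemma le_coe_mul_add_coe_mul_of_forall_lt_s8 {u v w : EReal} {a : ℝ} (hu : u ≠ ⊥) (hv : v ≠ ⊥)
    (ha₀ : 0 < a) (ha₁ : a < 1)
    (h : ∀ p q : ℝ, u < p → v < q → w ≤ ((a * p + (1 - a) * q : ℝ) : EReal)) :
    w ≤ a * u + ((1 - a : ℝ) : EReal) * v := by
  have hb : 0 < 1 - a := _root_.sub_pos.2 ha₁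
  induction u using EReal.rec with
  | bot => exact absurd rfl hu
  | top =>
    induction v using EReal.rec with
    | bot => exact absurd rfl hv
    | top => rw [coe_mul_top_of_pos ha₀, coe_mul_top_of_pos hb, top_add_top]; exact le_top
    | coe q => rw [coe_mul_top_of_pos ha₀, ← coe_mul, top_add_coe]; exact le_top
  | coe p =>
    induction v using EReal.rec with
    | bot => exact absurd rfl hv
    | top => rw [coe_mul_top_of_pos hb, ← coe_mul, coe_add_top]; exact le_top
    | coe q =>
      refine le_of_forall_lt_iff_le.1 fun z hz => ?_
      have hδ : 0 < z - (a * p + (1 - a) * q) := _root_.sub_pos.2 (by exact_mod_cast hz)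
      convert h (p + (z - (a * p + (1 - a) * q))) (q + (z - (a * p + (1 - a) * q)))
        (by exact_mod_cast lt_add_of_pos_right p hδ) (by exact_mod_cast lt_add_of_pos_right q hδ)
        using 2
      ring

end EReal

section HedgedRisk

variable {α : Type*} {M : Set (α → ℝ)} {ρ : (α → ℝ) → EReal} {L : Submodule ℝ (α → ℝ)}

def hedgedRisk (M : Set (α → ℝ)) (ρ : (α → ℝ) → EReal) (x : α → ℝ) : EReal :=
  ⨅ m ∈ M, ρ (x + m)

lemma hedgedRisk_le (x : α → ℝ) {m : α → ℝ} (hm : m ∈ M) : hedgedRisk M ρ x ≤ ρ (x + m) :=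
  iInf₂_le m hm

lemma hedgedRisk_zero : hedgedRisk M ρ 0 = ⨅ m ∈ M, ρ m := by
  simp only [hedgedRisk, zero_add]

lemma hedgedRisk_add_const (hML : M ⊆ L)
    (hcash : ∀ x ∈ L, ∀ c : ℝ, ρ (fun ω => x ω + c) = ρ x - c) {x : α → ℝ} (hx : x ∈ L)
    (c : ℝ) : hedgedRisk M ρ (fun ω => x ω + c) = hedgedRisk M ρ x - c := by
  simp only [hedgedRisk, EReal.iInf_sub_coe]
  refine iInf_congr fun _ => iInf_congr fun hm => ?_
  rw [← hcash _ (L.add_mem hx (hML hm))]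
  congr 1
  funext ω
  simp only [Pi.add_apply]
  ring

lemma hedgedRisk_antitone [MeasurableSpace α] {μ : Measure α} (hML : M ⊆ L)
    (hmono : ∀ x ∈ L, ∀ y ∈ L, x ≤ᵐ[μ] y → ρ y ≤ ρ x) {x y : α → ℝ} (hx : x ∈ L) (hy : y ∈ L)
    (hxy : x ≤ᵐ[μ] y) : hedgedRisk M ρ y ≤ hedgedRisk M ρ x :=
  iInf₂_mono fun _ hm => hmono _ (L.add_mem hx (hML hm)) _ (L.add_mem hy (hML hm))
    (hxy.mono fun _ h => add_le_add_left h _)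

lemma hedgedRisk_comb_le (hML : M ⊆ L) (hMconv : Convex ℝ M)
    (hconv : ∀ x ∈ L, ∀ y ∈ L, ∀ a : ℝ, 0 ≤ a → a ≤ 1 →
      ρ (fun ω => a * x ω + (1 - a) * y ω) ≤ (a : EReal) * ρ x + ((1 - a : ℝ) : EReal) * ρ y)
    {x y m₁ m₂ : α → ℝ} (hx : x ∈ L) (hy : y ∈ L) (hm₁ : m₁ ∈ M) (hm₂ : m₂ ∈ M) {a : ℝ}
    (ha₀ : 0 ≤ a) (ha₁ : a ≤ 1) :
    hedgedRisk M ρ (fun ω => a * x ω + (1 - a) * y ω) ≤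
      (a : EReal) * ρ (x + m₁) + ((1 - a : ℝ) : EReal) * ρ (y + m₂) :=
  calc hedgedRisk M ρ (fun ω => a * x ω + (1 - a) * y ω)
      ≤ ρ ((fun ω => a * x ω + (1 - a) * y ω) + (a • m₁ + (1 - a) • m₂)) :=
        hedgedRisk_le _ (hMconv hm₁ hm₂ ha₀ (sub_nonneg.2 ha₁) (by ring))
    _ = ρ (fun ω => a * (x + m₁) ω + (1 - a) * (y + m₂) ω) := by
        congr 1
        funext ω
        simp only [Pi.add_apply, Pi.smul_apply, smul_eq_mul]
        ring
    _ ≤ _ := hconv _ (L.add_mem hx (hML hm₁)) _ (L.add_mem hy (hML hm₂)) a ha₀ ha₁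

end HedgedRisk

section Conjugate

variable {α : Type*} {L : Submodule ℝ (α → ℝ)} {g : (α → ℝ) →ₗ[ℝ] ℝ}

lemma conjRM_sub_coe (f : (α → ℝ) → EReal) (r : ℝ) :
    conjRM (L : Set (α → ℝ)) (fun x => f x - r) g = conjRM L f g + r := by
  simp only [conjRM, EReal.coe_sub_sub_coe, EReal.iSup_add_coe]

lemma conjRM_hedgedRisk {M : Set (α → ℝ)} {ρ : (α → ℝ) → EReal} (h0M : (0 : α → ℝ) ∈ M)
    (hML : M ⊆ L) (hgM : ∀ m ∈ M, g m ≤ 0) :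
    conjRM (L : Set (α → ℝ)) (hedgedRisk M ρ) g = conjRM L ρ g := by
  refine le_antisymm (iSup₂_le fun x hx => ?_) ?_
  · simp only [hedgedRisk, EReal.coe_sub_iInf]
    refine iSup₂_le fun m hm => ?_
    calc (g x : EReal) - ρ (-x + m) ≤ g (x - m) - ρ (-(x - m)) := by
          rw [neg_sub, neg_add_eq_sub, map_sub]
          exact EReal.sub_le_sub (EReal.coe_le_coe_iff.2 (by linarith [hgM m hm])) le_rfl
      _ ≤ conjRM L ρ g :=
          le_iSup₂ (f := fun x (_ : x ∈ (L : Set (α → ℝ))) => (g x : EReal) - ρ (-x)) (x - m)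
            (L.sub_mem hx (hML hm))
  · exact iSup₂_mono fun x _ => EReal.sub_le_sub le_rfl (by simpa using hedgedRisk_le (-x) h0M)

lemma conjRM_eq_top_of_ray {f : (α → ℝ) → EReal} {x : α → ℝ} (hx : x ∈ L) {d b : ℝ} (hd : d < g x)
    (hf : ∀ t : ℝ, 0 ≤ t → f (-(t • x)) ≤ ((t * d + b : ℝ) : EReal)) :
    conjRM (L : Set (α → ℝ)) f g = ⊤ := by
  refine (EReal.eq_top_iff_forall_lt _).2 fun K => ?_
  set t := max 0 ((K + b + 1) / (g x - d))
  have ht : K + b + 1 ≤ t * (g x - d) := (div_le_iff₀ (sub_pos.2 hd)).1 (le_max_right _ _)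
  calc (K : EReal) < ((t * g x - (t * d + b) : ℝ) : EReal) := by exact_mod_cast (by linarith)
    _ ≤ g (t • x) - f (-(t • x)) := by
        rw [map_smul, smul_eq_mul, EReal.coe_sub]
        exact EReal.sub_le_sub le_rfl (hf t (le_max_left _ _))
    _ ≤ conjRM L f g :=
        le_iSup₂ (f := fun x (_ : x ∈ (L : Set (α → ℝ))) => (g x : EReal) - f (-x)) (t • x)
          (L.smul_mem t hx)

end Conjugate

section RiskIndiff

variable {α : Type*} {M : Set (α → ℝ)} {ρ : (α → ℝ) → EReal} {L : Submodule ℝ (α → ℝ)}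
  {g : (α → ℝ) →ₗ[ℝ] ℝ} {r₀ : ℝ}

lemma riskIndiff_eq_sInf (hML : M ⊆ L)
    (hcash : ∀ x ∈ L, ∀ c : ℝ, ρ (fun ω => x ω + c) = ρ x - c) {x : α → ℝ} (hx : x ∈ L) :
    riskIndiff M ρ x =
      sInf {c : EReal | ∃ r : ℝ, c = r ∧ hedgedRisk M ρ x - r ≤ ⨅ m ∈ M, ρ m} := by
  have htranslate (r : ℝ) :
      ⨅ m ∈ M, ρ (fun ω => r + m ω + x ω) = hedgedRisk M ρ x - r := by
    rw [← hedgedRisk_add_const hML hcash hx r]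
    refine iInf_congr fun m => iInf_congr fun _ => congrArg ρ (funext fun ω => ?_)
    simp only [Pi.add_apply]
    ring
  simp only [riskIndiff, htranslate]

lemma exists_iInf_eq_coe (h0M : (0 : α → ℝ) ∈ M) (hρ0 : ρ 0 < ⊤) (hML : M ⊆ L)
    (hcash : ∀ x ∈ L, ∀ c : ℝ, ρ (fun ω => x ω + c) = ρ x - c)
    (hI0 : riskIndiff M ρ 0 ≠ ⊥) : ∃ r₀ : ℝ, ⨅ m ∈ M, ρ m = r₀ := by
  have hne_top : ⨅ m ∈ M, ρ m ≠ ⊤ := ne_top_of_le_ne_top hρ0.ne (iInf₂_le 0 h0M)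
  have hne_bot : ⨅ m ∈ M, ρ m ≠ ⊥ := by
    intro hbot
    -- every real price is then acceptable, so the infimum defining `I(ρ)(0)` is `⊥`
    refine hI0 ((EReal.eq_bot_iff_forall_lt _).2 fun y => ?_)
    rw [riskIndiff_eq_sInf hML hcash L.zero_mem, hedgedRisk_zero, hbot]
    calc sInf {c : EReal | ∃ r : ℝ, c = r ∧ (⊥ : EReal) - r ≤ ⊥} ≤ ((y - 1 : ℝ) : EReal) :=
          sInf_le ⟨y - 1, rfl, by simp⟩
      _ < y := by exact_mod_cast sub_one_lt y
  exact ⟨_, (EReal.coe_toReal hne_top hne_bot).symm⟩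

lemma riskIndiff_eq_hedgedRisk_sub (hML : M ⊆ L)
    (hcash : ∀ x ∈ L, ∀ c : ℝ, ρ (fun ω => x ω + c) = ρ x - c) (hr₀ : ⨅ m ∈ M, ρ m = r₀)
    {x : α → ℝ} (hx : x ∈ L) : riskIndiff M ρ x = hedgedRisk M ρ x - r₀ := by
  rw [riskIndiff_eq_sInf hML hcash hx, hr₀]
  simp only [EReal.sub_coe_le_coe_comm]
  exact EReal.sInf_coe_of_le _

lemma riskIndiff_add_const (hI : ∀ x ∈ L, riskIndiff M ρ x = hedgedRisk M ρ x - r₀)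
    (hML : M ⊆ L) (hcash : ∀ x ∈ L, ∀ c : ℝ, ρ (fun ω => x ω + c) = ρ x - c)
    (hconst : ∀ c : ℝ, (fun _ => c) ∈ L) {x : α → ℝ} (hx : x ∈ L) (c : ℝ) :
    riskIndiff M ρ (fun ω => x ω + c) = riskIndiff M ρ x - c := by
  rw [hI (fun ω => x ω + c) (L.add_mem hx (hconst c)), hI x hx,
    hedgedRisk_add_const hML hcash hx]
  simp only [sub_eq_add_neg]
  exact add_right_comm _ _ _

lemma riskIndiff_const (hI : ∀ x ∈ L, riskIndiff M ρ x = hedgedRisk M ρ x - r₀)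
    (hr₀ : ⨅ m ∈ M, ρ m = r₀) (hML : M ⊆ L)
    (hcash : ∀ x ∈ L, ∀ c : ℝ, ρ (fun ω => x ω + c) = ρ x - c) {c : ℝ}
    (hc : (fun _ => c) ∈ L) : riskIndiff M ρ (fun _ => c) = ((-c : ℝ) : EReal) := by
  have hB := hedgedRisk_add_const hML hcash L.zero_mem c
  simp only [Pi.zero_apply, zero_add, hedgedRisk_zero, hr₀] at hB
  rw [hI _ hc, hB, ← EReal.coe_sub, ← EReal.coe_sub]
  ring_nf

lemma riskIndiff_convex (hI : ∀ x ∈ L, riskIndiff M ρ x = hedgedRisk M ρ x - r₀)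
    (hIbot : ∀ x ∈ L, riskIndiff M ρ x ≠ ⊥) (hML : M ⊆ L) (hMconv : Convex ℝ M)
    (hconv : ∀ x ∈ L, ∀ y ∈ L, ∀ a : ℝ, 0 ≤ a → a ≤ 1 →
      ρ (fun ω => a * x ω + (1 - a) * y ω) ≤ (a : EReal) * ρ x + ((1 - a : ℝ) : EReal) * ρ y)
    {x y : α → ℝ} (hx : x ∈ L) (hy : y ∈ L) {a : ℝ} (ha₀ : 0 ≤ a) (ha₁ : a ≤ 1) :
    riskIndiff M ρ (fun ω => a * x ω + (1 - a) * y ω) ≤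
      (a : EReal) * riskIndiff M ρ x + ((1 - a : ℝ) : EReal) * riskIndiff M ρ y := by
  rcases ha₀.eq_or_lt with rfl | ha₀'
  · simp
  rcases ha₁.eq_or_lt with rfl | ha₁'
  · simp
  refine EReal.le_coe_mul_add_coe_mul_of_forall_lt_s8 (hIbot x hx) (hIbot y hy) ha₀' ha₁'
    fun p q hp hq => ?_
  have hsub_lt {z : α → ℝ} (hz : z ∈ L) {p : ℝ} (hp : riskIndiff M ρ z < p) :
      ∃ m ∈ M, ρ (z + m) < ((p + r₀ : ℝ) : EReal) := by
    rw [hI z hz, EReal.sub_lt_iff (.inl (EReal.coe_ne_bot _)) (.inl (EReal.coe_ne_top _))] at hp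
    simpa only [hedgedRisk, iInf_lt_iff, EReal.coe_add, exists_prop] using hp
  obtain ⟨m₁, hm₁, h₁⟩ := hsub_lt hx hp
  obtain ⟨m₂, hm₂, h₂⟩ := hsub_lt hy hq
  rw [hI (fun ω => a * x ω + (1 - a) * y ω) (L.add_mem (L.smul_mem a hx) (L.smul_mem (1 - a) hy)),
    EReal.sub_le_iff_le_add (.inl (EReal.coe_ne_bot _)) (.inl (EReal.coe_ne_top _))]
  calc hedgedRisk M ρ (fun ω => a * x ω + (1 - a) * y ω)
      ≤ (a : EReal) * ρ (x + m₁) + ((1 - a : ℝ) : EReal) * ρ (y + m₂) :=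
        hedgedRisk_comb_le hML hMconv hconv hx hy hm₁ hm₂ ha₀ ha₁
    _ ≤ (a : EReal) * ((p + r₀ : ℝ) : EReal) + ((1 - a : ℝ) : EReal) * ((q + r₀ : ℝ) : EReal) := by
        gcongr
    _ = ((a * p + (1 - a) * q : ℝ) : EReal) + r₀ := by
        norm_cast
        ring

lemma conjRM_riskIndiff (hI : ∀ x ∈ L, riskIndiff M ρ x = hedgedRisk M ρ x - r₀)
    (h0M : (0 : α → ℝ) ∈ M) (hML : M ⊆ L) (hgM : ∀ m ∈ M, g m ≤ 0) :
    conjRM (L : Set (α → ℝ)) (riskIndiff M ρ) g = conjRM L ρ g + r₀ := by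
  rw [← conjRM_hedgedRisk (ρ := ρ) h0M hML hgM, ← conjRM_sub_coe]
  exact iSup_congr fun x => iSup_congr fun hx => by rw [hI (-x) (L.neg_mem hx)]

lemma conjRM_riskIndiff_eq_top_of_pos (hI : ∀ x ∈ L, riskIndiff M ρ x = hedgedRisk M ρ x - r₀)
    (hML : M ⊆ L) (hMcone : ∀ m ∈ M, ∀ c : ℝ, 0 ≤ c → c • m ∈ M) (hρ0 : ρ 0 < ⊤)
    {m₀ : α → ℝ} (hm₀ : m₀ ∈ M) (hgm₀ : 0 < g m₀) :
    conjRM (L : Set (α → ℝ)) (riskIndiff M ρ) g = ⊤ := by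
  refine conjRM_eq_top_of_ray (hML hm₀) (b := (ρ 0).toReal - r₀) hgm₀ fun t ht => ?_
  rw [hI _ (L.neg_mem (L.smul_mem t (hML hm₀))), mul_zero, zero_add, EReal.coe_sub]
  refine EReal.sub_le_sub ?_ le_rfl
  calc hedgedRisk M ρ (-(t • m₀)) ≤ ρ (-(t • m₀) + t • m₀) := hedgedRisk_le _ (hMcone m₀ hm₀ t ht)
    _ = ρ 0 := by rw [neg_add_cancel]
    _ ≤ (ρ 0).toReal := EReal.le_coe_toReal hρ0.ne

lemma conjRM_riskIndiff_eq_top_of_ne_one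
    (hI : ∀ x ∈ L, riskIndiff M ρ x = hedgedRisk M ρ x - r₀) (hr₀ : ⨅ m ∈ M, ρ m = r₀)
    (hML : M ⊆ L) (hcash : ∀ x ∈ L, ∀ c : ℝ, ρ (fun ω => x ω + c) = ρ x - c)
    (hconst : ∀ c : ℝ, (fun _ => c) ∈ L) (hg1 : g (fun _ => 1) ≠ 1) :
    conjRM (L : Set (α → ℝ)) (riskIndiff M ρ) g = ⊤ := by
  -- on the ray `t ↦ t σ` the objective grows like `t (σ g(1) - σ) = t σ²`, whatever the sign of `σ`
  set σ := g (fun _ => 1) - 1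
  have hgσ : g (fun _ => σ) = σ * g (fun _ => 1) := by
    rw [← smul_eq_mul, ← map_smul]
    congr 1
    funext
    simp
  refine conjRM_eq_top_of_ray (hconst σ) (d := σ) (b := 0) ?_ fun t _ => ?_
  · have : 0 < σ * σ := mul_self_pos.2 (sub_ne_zero.2 hg1)
    rw [hgσ]
    linarith
  · have hray : -(t • fun _ : α => σ) = fun _ => -(t * σ) := by
      funext
      simp
    rw [hray, riskIndiff_const hI hr₀ hML hcash (hconst _)]
    simp

end RiskIndiff

theorem stmt_8_general (μ : Measure Ω)
    (L : Submodule ℝ (Ω → ℝ)) (hconst : ∀ c : ℝ, (fun _ => c) ∈ L)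
    (M : Set (Ω → ℝ)) (hML : M ⊆ (L : Set (Ω → ℝ)))
    (hMconv : Convex ℝ M)
    (hMcone : ∀ m ∈ M, ∀ c : ℝ, 0 ≤ c → c • m ∈ M)
    (hMneg : ∀ x ∈ L, x ≤ᵐ[μ] (0 : Ω → ℝ) → x ∈ M)
    (ρ : (Ω → ℝ) → EReal)
    (hproper : ρ 0 < ⊤)
    (hmono : ∀ x ∈ L, ∀ y ∈ L, x ≤ᵐ[μ] y → ρ y ≤ ρ x)
    (hcash : ∀ x ∈ L, ∀ c : ℝ, ρ (fun ω => x ω + c) = ρ x - (c : EReal))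
    (hconv : ∀ x ∈ L, ∀ y ∈ L, ∀ a : ℝ, 0 ≤ a → a ≤ 1 →
      ρ (fun ω => a * x ω + (1 - a) * y ω) ≤ (a : EReal) * ρ x + ((1 - a : ℝ) : EReal) * ρ y)
    (hIbot : ∀ x ∈ L, riskIndiff M ρ x ≠ ⊥) :
    -- `inf_{m∈M} ρ(m)` is finite
    (∃ r0 : ℝ, (⨅ m ∈ M, ρ m) = (r0 : EReal)) ∧
    -- `I(ρ)` is a convex risk measure
    riskIndiff M ρ 0 < ⊤ ∧
    (∀ x ∈ L, ∀ y ∈ L, x ≤ᵐ[μ] y → riskIndiff M ρ y ≤ riskIndiff M ρ x) ∧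
    (∀ x ∈ L, ∀ c : ℝ, riskIndiff M ρ (fun ω => x ω + c) = riskIndiff M ρ x - (c : EReal)) ∧
    (∀ x ∈ L, ∀ y ∈ L, ∀ a : ℝ, 0 ≤ a → a ≤ 1 →
      riskIndiff M ρ (fun ω => a * x ω + (1 - a) * y ω) ≤
        (a : EReal) * riskIndiff M ρ x + ((1 - a : ℝ) : EReal) * riskIndiff M ρ y) ∧
    -- the conjugate of `I(ρ)`
    (∀ g : (Ω → ℝ) →ₗ[ℝ] ℝ, (∀ x ∈ L, (0 : Ω → ℝ) ≤ᵐ[μ] x → 0 ≤ g x) →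
      ((g (fun _ => 1) = 1 ∧ ∀ m ∈ M, g m ≤ 0) →
        conjRM (L : Set (Ω → ℝ)) (riskIndiff M ρ) g =
          conjRM (L : Set (Ω → ℝ)) ρ g + ⨅ m ∈ M, ρ m) ∧
      (¬ (g (fun _ => 1) = 1 ∧ ∀ m ∈ M, g m ≤ 0) →
        conjRM (L : Set (Ω → ℝ)) (riskIndiff M ρ) g = ⊤)) := by
  have h0M : (0 : Ω → ℝ) ∈ M := hMneg 0 L.zero_mem (EventuallyLE.refl _ _)
  obtain ⟨r₀, hr₀⟩ := exists_iInf_eq_coe h0M hproper hML hcash (hIbot 0 L.zero_mem)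
  have hI : ∀ x ∈ L, riskIndiff M ρ x = hedgedRisk M ρ x - r₀ :=
    fun x hx => riskIndiff_eq_hedgedRisk_sub hML hcash hr₀ hx
  refine ⟨⟨r₀, hr₀⟩, ?_, fun x hx y hy hxy => ?_,
    fun x hx c => riskIndiff_add_const hI hML hcash hconst hx c,
    fun x hx y hy a ha₀ ha₁ => riskIndiff_convex hI hIbot hML hMconv hconv hx hy ha₀ ha₁,
    fun g _ => ⟨fun ⟨_, hgM⟩ => hr₀ ▸ conjRM_riskIndiff hI h0M hML hgM, fun hg => ?_⟩⟩
  · rw [hI 0 L.zero_mem, hedgedRisk_zero, hr₀, ← EReal.coe_sub]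
    exact EReal.coe_lt_top _
  · rw [hI x hx, hI y hy]
    exact EReal.sub_le_sub (hedgedRisk_antitone hML hmono hx hy hxy) le_rfl
  · by_cases hgM : ∀ m ∈ M, g m ≤ 0
    · exact conjRM_riskIndiff_eq_top_of_ne_one hI hr₀ hML hcash hconst fun hg1 => hg ⟨hg1, hgM⟩
    · push Not at hgM
      obtain ⟨m₀, hm₀, hgm₀⟩ := hgM
      exact conjRM_riskIndiff_eq_top_of_pos hI hML hMcone hproper hm₀ hgm₀

/-- if the risk indifference price `I(ρ)` of a convex risk measure `ρ`
is `(-∞,∞]`-valued, then `inf_{m∈M} ρ(m)` is finite, `I(ρ)` is a convex risk measure,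
and `I(ρ)*(g) = ρ*(g) + inf_{m∈M} ρ(m)` for positive normalized `g` vanishing
nonpositively on `M`, while `I(ρ)*(g) = ∞` otherwise. -/
theorem stmt_8 (μ : Measure Ω) [IsProbabilityMeasure μ]
    (L : Submodule ℝ (Ω → ℝ)) (hconst : ∀ c : ℝ, (fun _ => c) ∈ L)
    (M : Set (Ω → ℝ)) (hML : M ⊆ (L : Set (Ω → ℝ)))
    (hMconv : Convex ℝ M)
    (hMcone : ∀ m ∈ M, ∀ c : ℝ, 0 ≤ c → c • m ∈ M)
    (hMneg : ∀ x ∈ L, x ≤ᵐ[μ] (0 : Ω → ℝ) → x ∈ M)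
    (ρ : (Ω → ℝ) → EReal)
    (hproper : ρ 0 < ⊤) (hbot : ∀ x ∈ L, ρ x ≠ ⊥)
    (hmono : ∀ x ∈ L, ∀ y ∈ L, x ≤ᵐ[μ] y → ρ y ≤ ρ x)
    (hcash : ∀ x ∈ L, ∀ c : ℝ, ρ (fun ω => x ω + c) = ρ x - (c : EReal))
    (hconv : ∀ x ∈ L, ∀ y ∈ L, ∀ a : ℝ, 0 ≤ a → a ≤ 1 →
      ρ (fun ω => a * x ω + (1 - a) * y ω) ≤ (a : EReal) * ρ x + ((1 - a : ℝ) : EReal) * ρ y)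
    (hIbot : ∀ x ∈ L, riskIndiff M ρ x ≠ ⊥) :
    -- `inf_{m∈M} ρ(m)` is finite
    (∃ r0 : ℝ, (⨅ m ∈ M, ρ m) = (r0 : EReal)) ∧
    -- `I(ρ)` is a convex risk measure
    riskIndiff M ρ 0 < ⊤ ∧
    (∀ x ∈ L, ∀ y ∈ L, x ≤ᵐ[μ] y → riskIndiff M ρ y ≤ riskIndiff M ρ x) ∧
    (∀ x ∈ L, ∀ c : ℝ, riskIndiff M ρ (fun ω => x ω + c) = riskIndiff M ρ x - (c : EReal)) ∧
    (∀ x ∈ L, ∀ y ∈ L, ∀ a : ℝ, 0 ≤ a → a ≤ 1 →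
      riskIndiff M ρ (fun ω => a * x ω + (1 - a) * y ω) ≤
        (a : EReal) * riskIndiff M ρ x + ((1 - a : ℝ) : EReal) * riskIndiff M ρ y) ∧
    -- the conjugate of `I(ρ)`
    (∀ g : (Ω → ℝ) →ₗ[ℝ] ℝ, (∀ x ∈ L, (0 : Ω → ℝ) ≤ᵐ[μ] x → 0 ≤ g x) →
      ((g (fun _ => 1) = 1 ∧ ∀ m ∈ M, g m ≤ 0) →
        conjRM (L : Set (Ω → ℝ)) (riskIndiff M ρ) g =
          conjRM (L : Set (Ω → ℝ)) ρ g + ⨅ m ∈ M, ρ m) ∧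
      (¬ (g (fun _ => 1) = 1 ∧ ∀ m ∈ M, g m ≤ 0) →
        conjRM (L : Set (Ω → ℝ)) (riskIndiff M ρ) g = ⊤)) :=
  stmt_8_general μ L hconst M hML hMconv hMcone hMneg ρ hproper hmono hcash hconv hIbot
end
end

section
/- Suppose ρ(x) = sup_{Q∈𝒬} {E_Q[-x] - c(Q)} for some function c : 𝒬 → ℝ, and ρ(0) = 0. Then inf_{m∈M} ρ(m) = 0 and ρ is a fixed point of the risk indifference operator: I(ρ)(x) := inf_{m∈M} ρ(m+x) - inf_{m∈M} ρ(m) = ρ(x) for all x ∈ L. -/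
noncomputable section
open MeasureTheory Filter Topology
open scoped ENNReal

variable {Ω : Type*} [MeasurableSpace Ω]

/-- if `ρ(x) = sup_{Q∈𝒬} {E_Q[-x] - c(Q)}` with `ρ(0) = 0`, then
`inf_{m∈M} ρ(m) = 0` and `ρ` is a fixed point of the risk indifference operator:
`inf_{m∈M} ρ(m + x) = ρ(x)` for all `x ∈ L`. -/
theorem stmt_11 (μ : Measure Ω) [IsProbabilityMeasure μ]
    (L : Submodule ℝ (Ω → ℝ)) (hconst : ∀ c : ℝ, (fun _ => c) ∈ L)
    (M : Set (Ω → ℝ)) (hML : M ⊆ (L : Set (Ω → ℝ)))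
    (hMconv : Convex ℝ M)
    (hMcone : ∀ m ∈ M, ∀ c : ℝ, 0 ≤ c → c • m ∈ M)
    (hMneg : ∀ x ∈ L, x ≤ᵐ[μ] (0 : Ω → ℝ) → x ∈ M)
    (ρ : (Ω → ℝ) → EReal) (c : (Ω → ℝ) → ℝ)
    (hrep : ∀ x ∈ L, ρ x =
      ⨆ g ∈ QSet μ (L : Set (Ω → ℝ)) M,
        ((↑(∫ ω, g ω * (-(x ω)) ∂μ) : EReal) - (c g : EReal)))
    (hzero : ρ 0 = 0) :
    (⨅ m ∈ M, ρ m) = 0 ∧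
    (∀ x ∈ L, (⨅ m ∈ M, ρ (m + x)) = ρ x) := by
  classical
  have h0M : (0 : Ω → ℝ) ∈ M := hMneg 0 L.zero_mem (Filter.EventuallyLE.refl _ _)
  -- the representation at 0
  have h0rep : (0 : EReal) =
      ⨆ g ∈ QSet μ (L : Set (Ω → ℝ)) M,
        ((↑(∫ ω, g ω * (-((0 : Ω → ℝ) ω)) ∂μ) : EReal) - (c g : EReal)) := by
    rw [← hzero]; exact hrep 0 L.zero_mem
  -- key: for m ∈ M and g ∈ 𝒬, E_g[-m] ≥ 0
  have hEneg : ∀ m ∈ M, ∀ g ∈ QSet μ (L : Set (Ω → ℝ)) M,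
      0 ≤ ∫ ω, g ω * (-(m ω)) ∂μ := by
    intro m hm g hg
    have h1 : (∫ ω, g ω * m ω ∂μ) ≤ 0 := hg.2.2.2 m hm
    have h2 : (fun ω => g ω * (-(m ω))) = fun ω => -(g ω * m ω) := by
      funext ω; ring
    rw [h2, integral_neg]
    linarith
  -- key: ρ m ≥ 0 for m ∈ M
  have hkey : ∀ m ∈ M, (0 : EReal) ≤ ρ m := by
    intro m hm
    calc (0 : EReal)
        = ⨆ g ∈ QSet μ (L : Set (Ω → ℝ)) M,
            ((↑(∫ ω, g ω * (-((0 : Ω → ℝ) ω)) ∂μ) : EReal) - (c g : EReal)) := h0rep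
      _ ≤ ⨆ g ∈ QSet μ (L : Set (Ω → ℝ)) M,
            ((↑(∫ ω, g ω * (-(m ω)) ∂μ) : EReal) - (c g : EReal)) := by
          refine iSup₂_mono fun g hg => ?_
          have h0 : (∫ ω, g ω * (-((0 : Ω → ℝ) ω)) ∂μ) = 0 := by simp
          rw [h0, ← EReal.coe_sub, ← EReal.coe_sub, EReal.coe_le_coe_iff]
          have := hEneg m hm g hg
          linarith
      _ = ρ m := (hrep m (hML hm)).symm
  have hinf : (⨅ m ∈ M, ρ m) = 0 := by
    refine le_antisymm ?_ (le_iInf₂ hkey)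
    calc (⨅ m ∈ M, ρ m) ≤ ρ 0 := iInf₂_le 0 h0M
      _ = 0 := hzero
  refine ⟨hinf, fun x hx => ?_⟩
  refine le_antisymm ?_ ?_
  · calc (⨅ m ∈ M, ρ (m + x)) ≤ ρ (0 + x) := iInf₂_le 0 h0M
      _ = ρ x := by rw [zero_add]
  · refine le_iInf₂ fun m hm => ?_
    have hmL : m ∈ L := hML hm
    have hmxL : m + x ∈ L := L.add_mem hmL hx
    rw [hrep x hx, hrep (m + x) hmxL]
    refine iSup₂_mono fun g hg => ?_
    rw [← EReal.coe_sub, ← EReal.coe_sub, EReal.coe_le_coe_iff]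
    have him : Integrable (fun ω => g ω * (-(m ω))) μ := by
      have h := (hg.1.2 m hmL).neg
      refine h.congr (Filter.Eventually.of_forall fun ω => ?_)
      show -(g ω * m ω) = g ω * (-(m ω)); ring
    have hix : Integrable (fun ω => g ω * (-(x ω))) μ := by
      have h := (hg.1.2 x hx).neg
      refine h.congr (Filter.Eventually.of_forall fun ω => ?_)
      show -(g ω * x ω) = g ω * (-(x ω)); ring
    have hsplit : (∫ ω, g ω * (-((m + x) ω)) ∂μ)
        = (∫ ω, g ω * (-(m ω)) ∂μ) + ∫ ω, g ω * (-(x ω)) ∂μ := by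
      rw [← integral_add him hix]
      congr 1; funext ω
      show g ω * (-(m ω + x ω)) = _
      ring
    have := hEneg m hm g hg
    rw [hsplit]
    linarith
end
end

section
/- Let ρ_l be a shortfall risk measure and ρ̂_l(x) := ρ_l(x) - ρ_l(0) its normalization. Then inf_{m∈M} ρ_l(m + x) = ρ_l(x) for every x ∈ L, and consequently I(ρ̂_l) = ρ̂_l (ρ̂_l is a fixed point of the risk indifference operator); hence if ρ̂_l is a convex risk measure with ρ̂_l(0)=0 and the Fatou property, it is a good deal valuation. -/
noncomputable section
open MeasureTheory Filter Topology
open scoped ENNReal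

variable {Ω : Type*} [MeasurableSpace Ω]

/-- The shortfall risk measure
`ρ_l(x) = inf {c ∈ ℝ : ∃ m ∈ M, E[l((c + m + x)⁻)] ≤ δ}`. -/
def shortfallRM (μ : Measure Ω) (M : Set (Ω → ℝ)) (l : ℝ → ℝ) (δ : ℝ)
    (x : Ω → ℝ) : EReal :=
  sInf {c : EReal | ∃ r : ℝ, c = (r : EReal) ∧ ∃ m ∈ M,
    (∫ ω, l (max (-(r + m ω + x ω)) 0) ∂μ) ≤ δ}

/-!
Since `M` is a convex cone, `m' ∈ M` hedging `m + x` at cost `c` gives `m' + m ∈ M` hedging `x`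
at the same cost, so `ρ_l(x) ≤ ρ_l(m + x)` for every `m ∈ M`; with `0 ∈ M` the infimum over `M`
of `ρ_l(m + ·)` is attained at `m = 0`. Normalizing preserves this, which makes `ρ̂_l` a fixed
point of the risk indifference operator, and gives `ρ̂_l(-m) ≤ 0 ≤ ρ̂_l(m)` on `M`. Monotonicity
and cash invariance turn these two inequalities into the no-arbitrage pricing bounds.
-/

theorem add_mem_of_convex_of_smul_mem {𝕜 E : Type*} [Field 𝕜] [LinearOrder 𝕜]
    [IsStrictOrderedRing 𝕜] [AddCommGroup E] [Module 𝕜 E] {M : Set E} (hconv : Convex 𝕜 M)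
    (hcone : ∀ m ∈ M, ∀ c : 𝕜, 0 ≤ c → c • m ∈ M) {m m' : E} (hm : m ∈ M) (hm' : m' ∈ M) :
    m + m' ∈ M := by
  have hmid : (2⁻¹ : 𝕜) • m + (2⁻¹ : 𝕜) • m' ∈ M :=
    hconv hm hm' (by positivity) (by positivity) (by norm_num)
  convert hcone _ hmid 2 zero_le_two using 1
  rw [smul_add, smul_smul, smul_smul, mul_inv_cancel₀ two_ne_zero, one_smul, one_smul]

theorem shortfallRM_le_add {μ : Measure Ω} {M : Set (Ω → ℝ)} {l : ℝ → ℝ} {δ : ℝ}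
    (hMadd : ∀ m ∈ M, ∀ m' ∈ M, m + m' ∈ M) {m : Ω → ℝ} (hm : m ∈ M) (x : Ω → ℝ) :
    shortfallRM μ M l δ x ≤ shortfallRM μ M l δ (m + x) := by
  refine sInf_le_sInf ?_
  rintro _ ⟨r, rfl, m', hm', h⟩
  refine ⟨r, rfl, m' + m, hMadd m' hm' m hm, ?_⟩
  simpa only [Pi.add_apply, add_assoc] using h

theorem iInf_add_eq_of_le_add {E α : Type*} [AddZeroClass E] [CompleteLattice α] {M : Set E}
    {ρ : E → α} (h0 : (0 : E) ∈ M) (hρ : ∀ m ∈ M, ∀ x, ρ x ≤ ρ (m + x)) (x : E) :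
    ⨅ m ∈ M, ρ (m + x) = ρ x :=
  le_antisymm ((iInf₂_le (0 : E) h0).trans_eq (congrArg ρ (zero_add x)))
    (le_iInf₂ fun m hm => hρ m hm x)

def riskIndifference {E : Type*} [Add E] (M : Set E) (ρ : E → EReal) (x : E) : EReal :=
  (⨅ m ∈ M, ρ (m + x)) - ⨅ m ∈ M, ρ m

theorem riskIndifference_eq_of_le_add {E : Type*} [AddZeroClass E] {M : Set E} {ρ : E → EReal}
    (h0 : (0 : E) ∈ M) (hρ : ∀ m ∈ M, ∀ x, ρ x ≤ ρ (m + x)) (x : E) :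
    riskIndifference M ρ x = ρ x - ρ 0 := by
  have hM : ⨅ m ∈ M, ρ m = ρ 0 := by
    simpa only [add_zero] using iInf_add_eq_of_le_add h0 hρ 0
  rw [riskIndifference, iInf_add_eq_of_le_add h0 hρ x, hM]

namespace IsCRM

variable {μ : Measure Ω} {L : Submodule ℝ (Ω → ℝ)} {M : Set (Ω → ℝ)} {ρ : (Ω → ℝ) → EReal}

theorem neg_supCost_le (hρ : IsCRM μ L ρ) (hconst : ∀ c : ℝ, (fun _ => c) ∈ L)
    (hML : M ⊆ L) (hM : ∀ m ∈ M, 0 ≤ ρ m) {x : Ω → ℝ} (hx : x ∈ L) :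
    -supCost μ M x ≤ ρ (-x) := by
  obtain ⟨-, -, hmono, hcash, -⟩ := hρ
  rw [EReal.neg_le]
  refine le_sInf ?_
  rintro _ ⟨r, rfl, m, hm, hhedge⟩
  rw [EReal.neg_le]
  have hle : -x ≤ᵐ[μ] fun ω => m ω + r := by
    filter_upwards [hhedge] with ω hω
    simp only [Pi.neg_apply]
    linarith
  calc -(r : EReal) = 0 - (r : EReal) := by simp
    _ ≤ ρ m - r := EReal.sub_le_sub (hM m hm) le_rfl
    _ = ρ fun ω => m ω + r := (hcash m (hML hm) r).symm
    _ ≤ ρ (-x) := hmono _ (L.neg_mem hx) _ (L.add_mem (hML hm) (hconst r)) hle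

theorem le_supCost (hρ : IsCRM μ L ρ) (hconst : ∀ c : ℝ, (fun _ => c) ∈ L)
    (hML : M ⊆ L) (hM : ∀ m ∈ M, ρ (-m) ≤ 0) {y : Ω → ℝ} (hy : y ∈ L) :
    ρ y ≤ supCost μ M y := by
  obtain ⟨-, -, hmono, hcash, -⟩ := hρ
  refine le_sInf ?_
  rintro _ ⟨r, rfl, m, hm, hhedge⟩
  have hle : (fun ω => (-m) ω + -r) ≤ᵐ[μ] y := by
    filter_upwards [hhedge] with ω hω
    simp only [Pi.neg_apply]
    linarith
  have hmL : -m ∈ L := L.neg_mem (hML hm)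
  calc ρ y ≤ ρ fun ω => (-m) ω + -r := hmono _ (L.add_mem hmL (hconst (-r))) _ hy hle
    _ = ρ (-m) - ((-r : ℝ) : EReal) := hcash _ hmL (-r)
    _ ≤ 0 - ((-r : ℝ) : EReal) := EReal.sub_le_sub (hM m hm) le_rfl
    _ = r := by norm_num

theorem isGDV (hρ : IsCRM μ L ρ) (hρ0 : ρ 0 = 0) (hF : HasFatou μ L ρ)
    (hconst : ∀ c : ℝ, (fun _ => c) ∈ L) (hML : M ⊆ L)
    (hρM : ∀ m ∈ M, ∀ x, ρ x ≤ ρ (m + x)) : IsGDV μ L M ρ := by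
  have hM_nonneg : ∀ m ∈ M, 0 ≤ ρ m := fun m hm => by
    simpa only [hρ0, add_zero] using hρM m hm 0
  have hM_neg : ∀ m ∈ M, ρ (-m) ≤ 0 := fun m hm => by
    simpa only [hρ0, add_neg_cancel] using hρM m hm (-m)
  exact ⟨hρ, hρ0, hF, fun x hx =>
    ⟨hρ.neg_supCost_le hconst hML hM_nonneg hx, hρ.le_supCost hconst hML hM_neg (L.neg_mem hx)⟩⟩

end IsCRM

theorem stmt_15_general (μ : Measure Ω)
    (L : Submodule ℝ (Ω → ℝ)) (hconst : ∀ c : ℝ, (fun _ => c) ∈ L)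
    (M : Set (Ω → ℝ)) (hML : M ⊆ (L : Set (Ω → ℝ)))
    (hMconv : Convex ℝ M)
    (hMcone : ∀ m ∈ M, ∀ c : ℝ, 0 ≤ c → c • m ∈ M)
    (hMneg : ∀ x ∈ L, x ≤ᵐ[μ] (0 : Ω → ℝ) → x ∈ M)
    (l : ℝ → ℝ)
    (δ : ℝ) :
    -- `inf_{m∈M} ρ_l(m + x) = ρ_l(x)`
    (∀ x ∈ L, (⨅ m ∈ M, shortfallRM μ M l δ (m + x)) = shortfallRM μ M l δ x) ∧
    -- the normalization is a fixed point of the risk indifference operator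
    ((∃ r : ℝ, shortfallRM μ M l δ 0 = (r : EReal)) →
      ∀ x ∈ L,
        (⨅ m ∈ M, (shortfallRM μ M l δ (m + x) - shortfallRM μ M l δ 0)) -
          (⨅ m ∈ M, (shortfallRM μ M l δ m - shortfallRM μ M l δ 0)) =
        shortfallRM μ M l δ x - shortfallRM μ M l δ 0) ∧
    -- if the normalization is a Fatou convex risk measure then it is a GDV
    (∀ ρ : (Ω → ℝ) → EReal,
      (∀ x, ρ x = shortfallRM μ M l δ x - shortfallRM μ M l δ 0) →
      IsCRM μ (L : Set (Ω → ℝ)) ρ → ρ 0 = 0 → HasFatou μ (L : Set (Ω → ℝ)) ρ →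
      IsGDV μ (L : Set (Ω → ℝ)) M ρ) := by
  set ρl := shortfallRM μ M l δ
  have h0M : (0 : Ω → ℝ) ∈ M := hMneg 0 L.zero_mem EventuallyLE.rfl
  have hle_add : ∀ m ∈ M, ∀ x, ρl x ≤ ρl (m + x) := fun _ hm =>
    shortfallRM_le_add (fun _ hm _ hm' => add_mem_of_convex_of_smul_mem hMconv hMcone hm hm') hm
  have hnorm_le_add : ∀ m ∈ M, ∀ x, ρl x - ρl 0 ≤ ρl (m + x) - ρl 0 := fun m hm x =>
    EReal.sub_le_sub (hle_add m hm x) le_rfl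
  refine ⟨fun x _ => iInf_add_eq_of_le_add h0M hle_add x, ?_, ?_⟩
  · rintro ⟨s, hs⟩ x -
    have hnorm0 : ρl 0 - ρl 0 = 0 := by rw [hs, ← EReal.coe_sub, sub_self, EReal.coe_zero]
    exact (riskIndifference_eq_of_le_add h0M hnorm_le_add x).trans (by rw [hnorm0, sub_zero])
  · intro ρ hρ hCRM hρ0 hF
    obtain rfl : ρ = fun x => ρl x - ρl 0 := funext hρ
    exact hCRM.isGDV hρ0 hF hconst hML hnorm_le_add

/-- `inf_{m∈M} ρ_l(m + x) = ρ_l(x)` for all `x ∈ L`; consequently the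
normalization `ρ̂_l = ρ_l - ρ_l(0)` is a fixed point of the risk indifference
operator, and if `ρ̂_l` is a convex risk measure with the Fatou property then it is
a good deal valuation. -/
theorem stmt_15 (μ : Measure Ω) [IsProbabilityMeasure μ]
    (L : Submodule ℝ (Ω → ℝ)) (hconst : ∀ c : ℝ, (fun _ => c) ∈ L)
    (M : Set (Ω → ℝ)) (hML : M ⊆ (L : Set (Ω → ℝ)))
    (hMconv : Convex ℝ M)
    (hMcone : ∀ m ∈ M, ∀ c : ℝ, 0 ≤ c → c • m ∈ M)
    (hMneg : ∀ x ∈ L, x ≤ᵐ[μ] (0 : Ω → ℝ) → x ∈ M)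
    (l : ℝ → ℝ) (hl0 : l 0 = 0)
    (hlmono : StrictMonoOn l (Set.Ici 0))
    (hlconv : ConvexOn ℝ (Set.Ici 0) l)
    (hlcont : ContinuousOn l (Set.Ici 0))
    (hlnn : ∀ x : ℝ, 0 ≤ x → 0 ≤ l x)
    (δ : ℝ) (hδ : 0 < δ) :
    -- `inf_{m∈M} ρ_l(m + x) = ρ_l(x)`
    (∀ x ∈ L, (⨅ m ∈ M, shortfallRM μ M l δ (m + x)) = shortfallRM μ M l δ x) ∧
    -- the normalization is a fixed point of the risk indifference operator
    ((∃ r : ℝ, shortfallRM μ M l δ 0 = (r : EReal)) →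
      ∀ x ∈ L,
        (⨅ m ∈ M, (shortfallRM μ M l δ (m + x) - shortfallRM μ M l δ 0)) -
          (⨅ m ∈ M, (shortfallRM μ M l δ m - shortfallRM μ M l δ 0)) =
        shortfallRM μ M l δ x - shortfallRM μ M l δ 0) ∧
    -- if the normalization is a Fatou convex risk measure then it is a GDV
    (∀ ρ : (Ω → ℝ) → EReal,
      (∀ x, ρ x = shortfallRM μ M l δ x - shortfallRM μ M l δ 0) →
      IsCRM μ (L : Set (Ω → ℝ)) ρ → ρ 0 = 0 → HasFatou μ (L : Set (Ω → ℝ)) ρ →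
      IsGDV μ (L : Set (Ω → ℝ)) M ρ) :=
  stmt_15_general μ L hconst M hML hMconv hMcone hMneg l δ
end
end

section
/- On Ω = {ω₁, ω₂} with M = L₋, identify Q ∈ 𝒬 with q = Q({ω₁}) ∈ [0,1], and define ρ(-z) = sup_{q∈[0,1]} {q z₁ + (1-q) z₂ - q²} where zᵢ = z(ωᵢ). Then ρ is a (noncoherent) good deal valuation that is relevant (ρ(-z) > 0 for z ∈ L₊ \ {0}), yet there exists no q ∈ (0,1) (equivalent measure) with penalty ρ*(Q) = q² equal to 0. -/
noncomputable section

/-- The valuation of Example 4.2 on `Ω = {ω₁, ω₂}`: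
`ρ(-z) = sup_{q ∈ [0,1]} {q z₁ + (1-q) z₂ - q²}`. -/
def rho18 (x : Fin 2 → ℝ) : ℝ :=
  sSup {y : ℝ | ∃ q ∈ Set.Icc (0 : ℝ) 1,
    y = q * (-(x 0)) + (1 - q) * (-(x 1)) - q ^ 2}

lemma rho18_bdd (x : Fin 2 → ℝ) :
    BddAbove {y : ℝ | ∃ q ∈ Set.Icc (0 : ℝ) 1,
      y = q * (-(x 0)) + (1 - q) * (-(x 1)) - q ^ 2} := by
  refine ⟨max (-(x 0)) (-(x 1)), ?_⟩
  rintro y ⟨q, ⟨h0, h1⟩, rfl⟩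
  have ha := le_max_left (-(x 0)) (-(x 1))
  have hb := le_max_right (-(x 0)) (-(x 1))
  nlinarith [sq_nonneg q, mul_le_mul_of_nonneg_left ha h0,
    mul_le_mul_of_nonneg_left hb (by linarith : (0:ℝ) ≤ 1 - q)]

lemma rho18_ne (x : Fin 2 → ℝ) :
    Set.Nonempty {y : ℝ | ∃ q ∈ Set.Icc (0 : ℝ) 1,
      y = q * (-(x 0)) + (1 - q) * (-(x 1)) - q ^ 2} :=
  ⟨_, ⟨0, ⟨le_rfl, zero_le_one⟩, rfl⟩⟩

lemma le_rho18 (x : Fin 2 → ℝ) (q : ℝ) (h0 : 0 ≤ q) (h1 : q ≤ 1) :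
    q * (-(x 0)) + (1 - q) * (-(x 1)) - q ^ 2 ≤ rho18 x :=
  le_csSup (rho18_bdd x) ⟨q, ⟨h0, h1⟩, rfl⟩

lemma rho18_le (x : Fin 2 → ℝ) (c : ℝ)
    (h : ∀ q, 0 ≤ q → q ≤ 1 → q * (-(x 0)) + (1 - q) * (-(x 1)) - q ^ 2 ≤ c) :
    rho18 x ≤ c := by
  refine csSup_le (rho18_ne x) ?_
  rintro y ⟨q, ⟨h0, h1⟩, rfl⟩
  exact h q h0 h1

lemma rho18_neg_ge (z : Fin 2 → ℝ) (q : ℝ) (h0 : 0 ≤ q) (h1 : q ≤ 1) :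
    q * z 0 + (1 - q) * z 1 - q ^ 2 ≤ rho18 (-z) := by
  have := le_rho18 (-z) q h0 h1
  simpa using this

lemma rho18_w (q : ℝ) (h0 : 0 ≤ q) (h1 : q ≤ 1) :
    rho18 (-(fun i => if i = 0 then 2*q else 0)) = q ^ 2 := by
  apply le_antisymm
  · apply rho18_le
    intro p hp0 hp1
    simp only [Pi.neg_apply, neg_neg]
    norm_num
    nlinarith [sq_nonneg (p - q)]
  · have := le_rho18 (-(fun i => if i = 0 then 2*q else 0)) q h0 h1
    simp only [Pi.neg_apply, neg_neg] at this
    norm_num at this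
    linarith

lemma rho18_penalty (q : ℝ) (hq : q ∈ Set.Icc (0:ℝ) 1) :
    (⨆ z : Fin 2 → ℝ,
        ((q * z 0 + (1 - q) * z 1 - rho18 (-z) : ℝ) : EReal)) = ((q ^ 2 : ℝ) : EReal) := by
  obtain ⟨h0, h1⟩ := hq
  apply le_antisymm
  · refine iSup_le fun z => ?_
    have := rho18_neg_ge z q h0 h1
    exact_mod_cast (by linarith : q * z 0 + (1 - q) * z 1 - rho18 (-z) ≤ q ^ 2)
  · refine le_iSup_of_le (fun i => if i = 0 then 2*q else 0) ?_
    rw [rho18_w q h0 h1]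
    norm_num
    exact_mod_cast (by nlinarith : (q^2:ℝ) ≤ q * (2*q) - q^2)


/-- on a two-point space with `M = L₋`, the valuation `rho18` is a
normalized, monotone, cash-invariant, convex (hence a convex risk measure) good deal
valuation which is relevant but not positively homogeneous, its penalty is
`ρ*(Q) = q²`, and no equivalent measure (`q ∈ (0,1)`) has zero penalty. -/
theorem stmt_18 :
    -- normalization
    rho18 0 = 0 ∧
    -- monotonicity
    (∀ x y : Fin 2 → ℝ, (∀ i, x i ≤ y i) → rho18 y ≤ rho18 x) ∧
    -- cash-invariance
    (∀ (x : Fin 2 → ℝ) (c : ℝ), rho18 (fun i => x i + c) = rho18 x - c) ∧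
    -- convexity
    (∀ (x y : Fin 2 → ℝ) (a : ℝ), 0 ≤ a → a ≤ 1 →
      rho18 (fun i => a * x i + (1 - a) * y i) ≤ a * rho18 x + (1 - a) * rho18 y) ∧
    -- good deal bounds (`M = L₋`, so `ρ⁰(-x) = max x` and `-ρ⁰(x) = min x`)
    (∀ x : Fin 2 → ℝ, min (x 0) (x 1) ≤ rho18 (-x) ∧ rho18 (-x) ≤ max (x 0) (x 1)) ∧
    -- relevance
    (∀ z : Fin 2 → ℝ, (∀ i, 0 ≤ z i) → z ≠ 0 → 0 < rho18 (-z)) ∧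
    -- not coherent (not positively homogeneous)
    (∃ (x : Fin 2 → ℝ) (c : ℝ), 0 < c ∧ rho18 (c • x) ≠ c * rho18 x) ∧
    -- the penalty is `ρ*(Q) = q²` …
    (∀ q ∈ Set.Icc (0 : ℝ) 1,
      (⨆ z : Fin 2 → ℝ,
        ((q * z 0 + (1 - q) * z 1 - rho18 (-z) : ℝ) : EReal)) = ((q ^ 2 : ℝ) : EReal)) ∧
    -- … and it vanishes for no `q ∈ (0,1)`
    (∀ q ∈ Set.Ioo (0 : ℝ) 1,
      (⨆ z : Fin 2 → ℝ,
        ((q * z 0 + (1 - q) * z 1 - rho18 (-z) : ℝ) : EReal)) ≠ 0) := by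
  refine ⟨?_, ?_, ?_, ?_, ?_, ?_, ?_, ?_, ?_⟩
  · -- normalization
    apply le_antisymm
    · apply rho18_le
      intro q h0 h1
      simp only [Pi.zero_apply]
      nlinarith [sq_nonneg q]
    · have := le_rho18 0 0 le_rfl zero_le_one
      simpa using this
  · -- monotonicity
    intro x y h
    apply rho18_le
    intro q h0 h1
    have := le_rho18 x q h0 h1
    nlinarith [mul_le_mul_of_nonneg_left (h 0) h0,
      mul_le_mul_of_nonneg_left (h 1) (by linarith : (0:ℝ) ≤ 1 - q)]
  · -- cash invariance
    intro x c
    apply le_antisymm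
    · apply rho18_le
      intro q h0 h1
      beta_reduce
      have := le_rho18 x q h0 h1
      nlinarith
    · have h2 : rho18 x ≤ rho18 (fun i => x i + c) + c := by
        apply rho18_le
        intro q h0 h1
        have := le_rho18 (fun i => x i + c) q h0 h1
        nlinarith
      linarith
  · -- convexity
    intro x y a ha ha1
    apply rho18_le
    intro q h0 h1
    have hx := le_rho18 x q h0 h1
    have hy := le_rho18 y q h0 h1
    nlinarith [mul_le_mul_of_nonneg_left hx ha,
      mul_le_mul_of_nonneg_left hy (by linarith : (0:ℝ) ≤ 1 - a)]
  · -- good deal bounds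
    intro x
    constructor
    · have := rho18_neg_ge x 0 le_rfl zero_le_one
      norm_num at this
      exact le_trans (min_le_right _ _) this
    · apply rho18_le
      intro q h0 h1
      simp only [Pi.neg_apply, neg_neg]
      have ha := le_max_left (x 0) (x 1)
      have hb := le_max_right (x 0) (x 1)
      nlinarith [sq_nonneg q, mul_le_mul_of_nonneg_left ha h0,
        mul_le_mul_of_nonneg_left hb (by linarith : (0:ℝ) ≤ 1 - q)]
  · -- relevance
    intro z hz hne
    by_cases h1 : 0 < z 1
    · have := rho18_neg_ge z 0 le_rfl zero_le_one
      norm_num at this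
      linarith
    · have hz1 : z 1 = 0 := le_antisymm (not_lt.1 h1) (hz 1)
      have hz0 : 0 < z 0 := by
        rcases (hz 0).lt_or_eq with h | h
        · exact h
        · exfalso; apply hne; funext i; fin_cases i
          · exact h.symm
          · exact hz1
      set q := min (z 0) 1 / 2 with hqdef
      have hq0 : 0 < q := by positivity
      have hq1 : q ≤ 1 := by
        have := min_le_right (z 0) 1
        simp only [hqdef]; linarith
      have hqz : q < z 0 := by
        have := min_le_left (z 0) 1
        simp only [hqdef]; linarith
      have := rho18_neg_ge z q hq0.le hq1
      have h2 : 0 < q * z 0 + (1 - q) * z 1 - q ^ 2 := by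
        rw [hz1]
        nlinarith
      linarith
  · -- not positively homogeneous
    refine ⟨fun i => if i = 0 then (-1:ℝ) else 0, 2, two_pos, ?_⟩
    have r1 : rho18 (fun i => if i = 0 then (-1:ℝ) else 0) = 1/4 := by
      apply le_antisymm
      · apply rho18_le
        intro q h0 h1
        norm_num
        nlinarith [sq_nonneg (q - 1/2)]
      · have := le_rho18 (fun i => if i = 0 then (-1:ℝ) else 0) (1/2)
          (by norm_num) (by norm_num)
        norm_num at this
        linarith
    have r2 : rho18 ((2:ℝ) • fun i => if i = 0 then (-1:ℝ) else 0) = 1 := by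
      apply le_antisymm
      · apply rho18_le
        intro q h0 h1
        simp only [Pi.smul_apply, smul_eq_mul]
        norm_num
        nlinarith [sq_nonneg (q - 1)]
      · have := le_rho18 ((2:ℝ) • fun i => if i = 0 then (-1:ℝ) else 0) 1
          zero_le_one le_rfl
        simp only [Pi.smul_apply, smul_eq_mul] at this
        norm_num at this
        linarith
    rw [r1, r2]
    norm_num
  · exact rho18_penalty
  · intro q hq
    rw [rho18_penalty q ⟨hq.1.le, hq.2.le⟩]
    have : (q:ℝ)^2 ≠ 0 := pow_ne_zero 2 (ne_of_gt hq.1)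
    exact_mod_cast this
end
end
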